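/- arXiv:1610.05453 — 7 statements merged into one kernel-verified Lean document; each statement's English description precedes it below -/
import Mathlib

section
/- For any discrete filtered set Ω, the closure in ℝ × ℂ of the set S_Ω := { (λ, ω) ∈ ℝ × ℂ : λ ≥ 0 and ω ∈ Ω_λ } equals S_{Ω̃} := { (λ, ω) : λ ≥ 0 and ω ∈ Ω̃_λ }, where Ω̃ is the upper closure of Ω. Consequently, the allowed open sets M_Ω := (ℝ × ℂ) \ closure(S_Ω) and M_{Ω̃} coincide. -/
open MeasureTheory Metric Set

noncomputable section

/-- A discrete filtered set (d.f.s.): a family of finite subsets of `ℂ`,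
nondecreasing in the parameter, empty for small parameter. -/
structure DFS where
  sets : ℝ → Set ℂ
  finite : ∀ L, (sets L).Finite
  mono : ∀ ⦃L₁ L₂ : ℝ⦄, L₁ ≤ L₂ → sets L₁ ⊆ sets L₂
  empty_small : ∃ δ > 0, sets δ = ∅

/-- Upper closure of a filtered family: `Ω̃_L := ⋂_{ε>0} Ω_{L+ε}`. -/
def ucFun (f : ℝ → Set ℂ) (L : ℝ) : Set ℂ := ⋂ ε > (0:ℝ), f (L + ε)

/-- `S_Ω := {(λ,ω) : λ ≥ 0, ω ∈ Ω_λ}`. -/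
def SingSet (f : ℝ → Set ℂ) : Set (ℝ × ℂ) := {p | 0 ≤ p.1 ∧ p.2 ∈ f p.1}

/-- The allowed open set `M_Ω := (ℝ×ℂ) \ closure S_Ω`. -/
def MSet (f : ℝ → Set ℂ) : Set (ℝ × ℂ) := (closure (SingSet f))ᶜ

/-- Sum of two filtered families. -/
def sumFun (f g : ℝ → Set ℂ) (L : ℝ) : Set ℂ :=
  {z | ∃ L₁ L₂ : ℝ, 0 ≤ L₁ ∧ 0 ≤ L₂ ∧ L₁ + L₂ = L ∧
      ∃ ω₁ ∈ f L₁, ∃ ω₂ ∈ g L₂, z = ω₁ + ω₂} ∪ f L ∪ g L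

/-- `iterSum f n` is the `(n+1)`-fold sum `f * ⋯ * f`. -/
def iterSum (f : ℝ → Set ℂ) : ℕ → ℝ → Set ℂ
  | 0 => f
  | n + 1 => sumFun (iterSum f n) f

/-- Arclength of `γ` on `[0,t]`. -/
def pathLen (γ : ℝ → ℂ) (t : ℝ) : ℝ := (eVariationOn γ (Set.Icc 0 t)).toReal

/-- `γ : [0,t₁] → ℂ` is an `Ω`-allowed path. -/
def OmAllowed (f : ℝ → Set ℂ) (γ : ℝ → ℂ) (t₁ : ℝ) : Prop :=
  0 ≤ t₁ ∧ γ 0 = 0 ∧ (∃ K, LipschitzOnWith K γ (Set.Icc 0 t₁)) ∧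
    ∀ t ∈ Set.Icc 0 t₁, (pathLen γ t, γ t) ∈ MSet f

/-- The germ `φ` admits analytic continuation along `γ|_{[0,t₁]}`, ending
with the germ `ψ` at `γ t₁`. -/
def ContinuesAlongTo (φ : ℂ → ℂ) (γ : ℝ → ℂ) (t₁ : ℝ) (ψ : ℂ → ℂ) : Prop :=
  ∃ (F : ℝ → ℂ → ℂ) (r : ℝ → ℝ),
    (∀ t ∈ Set.Icc 0 t₁, 0 < r t ∧ DifferentiableOn ℂ (F t) (ball (γ t) (r t))) ∧
    (∀ t ∈ Set.Icc 0 t₁, ∀ᶠ s in nhdsWithin t (Set.Icc 0 t₁),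
        Set.EqOn (F s) (F t) (ball (γ s) (r s) ∩ ball (γ t) (r t))) ∧
    (∀ᶠ z in nhds 0, F 0 z = φ z) ∧
    (∀ᶠ z in nhds (γ t₁), F t₁ z = ψ z)

/-- The germ `φ` admits analytic continuation along `γ|_{[0,t₁]}`. -/
def ContinuesAlong (φ : ℂ → ℂ) (γ : ℝ → ℂ) (t₁ : ℝ) : Prop :=
  ∃ ψ, ContinuesAlongTo φ γ t₁ ψ

/-- `φ` defines a holomorphic germ at `0`. -/
def HolGermAtZero (φ : ℂ → ℂ) : Prop := ∃ r > 0, DifferentiableOn ℂ φ (ball 0 r)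

/-- `Ω`-continuability: analytic continuation along every `Ω`-allowed path. -/
def OmContinuable (f : ℝ → Set ℂ) (φ : ℂ → ℂ) : Prop :=
  HolGermAtZero φ ∧ ∀ γ t₁, OmAllowed f γ t₁ → ContinuesAlong φ γ t₁

/-- Endless continuability. -/
def EndlesslyContinuable (φ : ℂ → ℂ) : Prop :=
  HolGermAtZero φ ∧ ∀ L > (0:ℝ), ∃ F : Set ℂ, F.Finite ∧
    ∀ γ : ℝ → ℂ, γ 0 = 0 → (∃ K, LipschitzOnWith K γ (Set.Icc 0 1)) →
      pathLen γ 1 < L → (∀ t ∈ Set.Ioc (0:ℝ) 1, γ t ∉ F) →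
      ContinuesAlong φ γ 1

/-- Euclidean norm on `ℝ × ℂ ≅ ℝ³`. -/
def eucNorm (p : ℝ × ℂ) : ℝ := Real.sqrt (p.1 ^ 2 + ‖p.2‖ ^ 2)

/-- Euclidean distance on `ℝ × ℂ ≅ ℝ³`. -/
def eucDist (p q : ℝ × ℂ) : ℝ := eucNorm (p - q)

/-- Euclidean distance from a point to a set in `ℝ × ℂ`. -/
def eucSetDist (p : ℝ × ℂ) (S : Set (ℝ × ℂ)) : ℝ := sInf (eucDist p '' S)

/-- The d.f.s. associated with a closed discrete set `Σ`. -/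
def omOf (S : Set ℂ) (L : ℝ) : Set ℂ := {ω ∈ S | ‖ω‖ ≤ L}

/-- `η(v) := dist(v, {(0,0)} ∪ S_Ω)`. -/
def etaFun (f : ℝ → Set ℂ) (v : ℝ × ℂ) : ℝ :=
  eucSetDist v ({((0:ℝ), (0:ℂ))} ∪ SingSet f)

/-- `D(w, v⃗) := Σⱼ η(vⱼ) + |w − Σⱼ vⱼ|`. -/
def DFun (f : ℝ → Set ℂ) (n : ℕ) (w : ℝ × ℂ) (v : Fin n → ℝ × ℂ) : ℝ :=
  (∑ j, etaFun f (v j)) + eucNorm (w - ∑ j, v j)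

/-- Convolution of holomorphic germs: `(f*g)(ζ) = ∫₀^ζ f(ξ)g(ζ-ξ)dξ`. -/
def cvl (f g : ℂ → ℂ) (ζ : ℂ) : ℂ := ζ * ∫ s in (0:ℝ)..1, f (s • ζ) * g (ζ - s • ζ)

/-- Iterated convolution `1 * f₁ * ⋯ * f_n`. -/
def iterConv : (n : ℕ) → (Fin n → ℂ → ℂ) → ℂ → ℂ
  | 0, _ => fun _ => 1
  | n + 1, f => cvl (iterConv n (fun i => f i.castSucc)) (f (Fin.last n))

/-- The standard simplex `Δ_n`. -/
def simplex (n : ℕ) : Set (Fin n → ℝ) := {s | (∀ i, 0 ≤ s i) ∧ ∑ i, s i ≤ 1}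

end

/-!
A point `(λ, ω)` lies in `S_{Ω̃}` iff `λ ≥ 0` and `ω ∈ Ω_L` for every `L > λ`. Hence `S_{Ω̃}` is the
intersection of the closed sets `{λ ≥ 0}` and `{λ ≥ L} ∪ (ℝ × Ω_L)`, so it is closed; it contains
`S_Ω` by monotonicity, and each of its points `(λ, ω)` is the limit of the points `(λ + ε, ω) ∈ S_Ω`.
-/

open Filter Topology

variable {f : ℝ → Set ℂ}

theorem mem_ucFun_iff {L : ℝ} {w : ℂ} : w ∈ ucFun f L ↔ ∀ L', L < L' → w ∈ f L' := by
  simp only [ucFun, mem_iInter₂]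
  refine ⟨fun h L' hL' => ?_, fun h ε hε => h _ (lt_add_of_pos_right L hε)⟩
  simpa using h (L' - L) (sub_pos.2 hL')

theorem singSet_ucFun_eq :
    SingSet (ucFun f) = {p | 0 ≤ p.1} ∩ ⋂ L, ({p | L ≤ p.1} ∪ Prod.snd ⁻¹' f L) := by
  ext ⟨l, w⟩
  simp only [SingSet, mem_ucFun_iff, mem_inter_iff, mem_iInter, mem_union, mem_ofPred_eq,
    mem_preimage, ← not_lt, or_iff_not_imp_left, not_not]

theorem isClosed_singSet_ucFun (hf : ∀ L, IsClosed (f L)) : IsClosed (SingSet (ucFun f)) := by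
  rw [singSet_ucFun_eq]
  exact (isClosed_le continuous_const continuous_fst).inter <| isClosed_iInter fun L =>
    (isClosed_le continuous_const continuous_fst).union ((hf L).preimage continuous_snd)

theorem singSet_subset_singSet_ucFun (hf : Monotone f) : SingSet f ⊆ SingSet (ucFun f) :=
  fun _ ⟨hl, hw⟩ => ⟨hl, mem_ucFun_iff.2 fun _ hL => hf hL.le hw⟩

theorem singSet_ucFun_subset_closure : SingSet (ucFun f) ⊆ closure (SingSet f) := by
  rintro ⟨l, w⟩ ⟨hl, hw⟩
  have hlim : Tendsto (fun ε : ℝ => (l + ε, w)) (𝓝[>] 0) (𝓝 (l, w)) := by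
    refine Tendsto.prodMk_nhds ?_ tendsto_const_nhds
    simpa using ((continuous_const_add l).tendsto 0).mono_left nhdsWithin_le_nhds
  refine mem_closure_of_tendsto hlim ?_
  filter_upwards [self_mem_nhdsWithin] with ε hε
  exact ⟨add_nonneg hl hε.le, mem_ucFun_iff.1 hw _ (lt_add_of_pos_right l hε)⟩

theorem closure_singSet_eq (hf : Monotone f) (hclosed : ∀ L, IsClosed (f L)) :
    closure (SingSet f) = SingSet (ucFun f) :=
  (closure_minimal (singSet_subset_singSet_ucFun hf) (isClosed_singSet_ucFun hclosed)).antisymm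
    singSet_ucFun_subset_closure

/-- `closure S_Ω = S_{Ω̃}`, hence `M_Ω = M_{Ω̃}`. -/
theorem closure_SingSet (Ω : DFS) :
    closure (SingSet Ω.sets) = SingSet (ucFun Ω.sets) ∧
    MSet Ω.sets = MSet (ucFun Ω.sets) := by
  have hclosed : ∀ L, IsClosed (Ω.sets L) := fun L => (Ω.finite L).isClosed
  have hcl := closure_singSet_eq Ω.mono hclosed
  refine ⟨hcl, ?_⟩
  rw [MSet, MSet, hcl, (isClosed_singSet_ucFun hclosed).closure_eq]
end

section
/- Let Ω be a d.f.s., let γ: [0,1] → ℂ be a Lipschitz path with γ(0) = 0, and let (L_n) be a sequence as in the structure lemma for Ω (so Ω̃_{L_n} = Ω̃_L = Ω_L for L_n < L < L_{n+1}). Then the following are equivalent: (1) γ is Ω-allowed; (2) γ(t) ∉ Ω̃_{L(γ|_{[0,t]})} for every t ∈ [0,1]; (3) for every t there exists n with L(γ|_{[0,t]}) < L_{n+1} and γ(t) ∉ Ω̃_{L_n}. Moreover the Ω-allowed paths coincide with the Ω̃-allowed paths. -/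
open MeasureTheory Metric Set

/-!
The closure of `S_Ω` is `S_Ω̃`: the points `(L + ε, ω)` of `S_Ω` accumulate exactly at the points
of `S_Ω̃`, and `S_Ω̃` is already closed because each `Ω_L` is finite, hence closed. So `M_Ω = M_Ω̃`,
and `(L, z) ∈ M_Ω` means `z ∉ Ω̃_L` for `L ≥ 0`. Finally `Ω̃` is constant on each `[L_n, L_{n+1})`,
and these intervals cover `[0, ∞)`.
-/

open Filter Topology

theorem exists_le_lt_succ_of_tendsto_atTop {α : Type*} [LinearOrder α] [NoMaxOrder α]
    {u : ℕ → α} (hu : Tendsto u atTop atTop) {x : α} (h0 : u 0 ≤ x) :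
    ∃ n, u n ≤ x ∧ x < u (n + 1) := by
  by_contra! h
  have hle : ∀ n, u n ≤ x := fun n => Nat.rec h0 (fun n ih => h n ih) n
  obtain ⟨n, hn⟩ := (hu.eventually_gt_atTop x).exists
  exact (hle n).not_gt hn

theorem pathLen_nonneg (γ : ℝ → ℂ) (t : ℝ) : 0 ≤ pathLen γ t := ENNReal.toReal_nonneg

section UpperClosure

variable {f : ℝ → Set ℂ}

theorem mem_ucFun_iff_s8 {L : ℝ} {z : ℂ} : z ∈ ucFun f L ↔ ∀ ε > 0, z ∈ f (L + ε) :=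
  mem_iInter₂

theorem ucFun_mono (hf : Monotone f) : Monotone (ucFun f) := fun _ _ h _ hz =>
  mem_ucFun_iff_s8.2 fun ε hε => hf (by linarith) (mem_ucFun_iff_s8.1 hz ε hε)

theorem subset_ucFun (hf : Monotone f) (L : ℝ) : f L ⊆ ucFun f L := fun _ hz =>
  mem_ucFun_iff_s8.2 fun _ hε => hf (by linarith) hz

theorem isClosed_setOf_mem_ucFun (hf : ∀ L, IsClosed (f L)) :
    IsClosed {p : ℝ × ℂ | p.2 ∈ ucFun f p.1} := by
  refine isOpen_compl_iff.1 (isOpen_iff_mem_nhds.2 ?_)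
  rintro ⟨L, z⟩ hz
  obtain ⟨ε, hε, hzε⟩ : ∃ ε > 0, z ∉ f (L + ε) := by simpa [mem_ucFun_iff_s8] using hz
  filter_upwards [prod_mem_nhds (Iio_mem_nhds (lt_add_of_pos_right L hε))
    ((hf _).isOpen_compl.mem_nhds hzε)]
  rintro ⟨L', z'⟩ ⟨hL', hz'⟩ hmem
  have := mem_ucFun_iff_s8.1 hmem (L + ε - L') (sub_pos.2 hL')
  exact hz' (by rwa [add_sub_cancel] at this)

theorem closure_singSet (hf : Monotone f) (hcl : ∀ L, IsClosed (f L)) :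
    closure (SingSet f) = SingSet (ucFun f) := by
  refine subset_antisymm (closure_minimal (fun p hp => ⟨hp.1, subset_ucFun hf _ hp.2⟩)
    (isClosed_singSet_ucFun hcl)) ?_
  rintro ⟨L, z⟩ ⟨hL, hz⟩
  have hlim : Tendsto (fun ε : ℝ => (L + ε, z)) (𝓝[>] 0) (𝓝 (L, z)) := by
    exact (((continuous_const.add continuous_id).prodMk continuous_const).tendsto' 0 (L, z)
      (by simp)).mono_left nhdsWithin_le_nhds
  refine mem_closure_of_tendsto hlim ?_
  filter_upwards [self_mem_nhdsWithin] with ε (hε : 0 < ε)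
  exact ⟨by linarith, mem_ucFun_iff_s8.1 hz ε hε⟩

theorem mSet_ucFun (hf : Monotone f) (hcl : ∀ L, IsClosed (f L)) :
    MSet (ucFun f) = MSet f := by
  rw [MSet, MSet, closure_singSet hf hcl, (isClosed_singSet_ucFun hcl).closure_eq]

theorem mem_mSet_iff (hf : Monotone f) (hcl : ∀ L, IsClosed (f L)) {L : ℝ} {z : ℂ} :
    (L, z) ∈ MSet f ↔ (0 ≤ L → z ∉ ucFun f L) := by
  rw [MSet, closure_singSet hf hcl, mem_compl_iff, SingSet, mem_ofPred_eq, not_and]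

end UpperClosure

theorem notMem_iff_exists_of_eq_on_Ioo {g : ℝ → Set ℂ} (hg : Monotone g)
    {u : ℕ → ℝ} (hu : Tendsto u atTop atTop)
    (hconst : ∀ n l, u n < l → l < u (n + 1) → g (u n) = g l)
    {ℓ : ℝ} (hℓ : u 0 ≤ ℓ) (z : ℂ) :
    z ∉ g ℓ ↔ ∃ n, ℓ < u (n + 1) ∧ z ∉ g (u n) := by
  have hIco : ∀ n, u n ≤ ℓ → ℓ < u (n + 1) → g (u n) = g ℓ := fun n h₁ h₂ =>
    h₁.eq_or_lt.elim (congrArg g) fun h₁ => hconst n ℓ h₁ h₂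
  constructor
  · intro hz
    obtain ⟨n, h₁, h₂⟩ := exists_le_lt_succ_of_tendsto_atTop hu hℓ
    exact ⟨n, h₂, hIco n h₁ h₂ ▸ hz⟩
  · rintro ⟨n, h₂, hz⟩ hmem
    rcases le_or_gt ℓ (u n) with h₁ | h₁
    · exact hz (hg h₁ hmem)
    · exact hz (hIco n h₁.le h₂ ▸ hmem)

theorem allowed_characterization_general (Ω : DFS) (γ : ℝ → ℂ) (hγ0 : γ 0 = 0)
    (hlip : ∃ K, LipschitzOnWith K γ (Set.Icc 0 1))
    (Lseq : ℕ → ℝ) (h0 : Lseq 0 = 0)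
    (htop : Filter.Tendsto Lseq Filter.atTop Filter.atTop)
    (hstruct : ∀ n : ℕ, ∀ l : ℝ, Lseq n < l → l < Lseq (n + 1) →
      ucFun Ω.sets (Lseq n) = ucFun Ω.sets l ∧ ucFun Ω.sets l = Ω.sets l) :
    (OmAllowed Ω.sets γ 1 ↔
      ∀ t ∈ Set.Icc (0:ℝ) 1, γ t ∉ ucFun Ω.sets (pathLen γ t)) ∧
    ((∀ t ∈ Set.Icc (0:ℝ) 1, γ t ∉ ucFun Ω.sets (pathLen γ t)) ↔
      ∀ t ∈ Set.Icc (0:ℝ) 1, ∃ n : ℕ,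
        pathLen γ t < Lseq (n + 1) ∧ γ t ∉ ucFun Ω.sets (Lseq n)) ∧
    (∀ (γ' : ℝ → ℂ) (t₁ : ℝ),
      OmAllowed Ω.sets γ' t₁ ↔ OmAllowed (ucFun Ω.sets) γ' t₁) := by
  have hcl : ∀ L, IsClosed (Ω.sets L) := fun L => (Ω.finite L).isClosed
  have hM {t : ℝ} : (pathLen γ t, γ t) ∈ MSet Ω.sets ↔ γ t ∉ ucFun Ω.sets (pathLen γ t) := by
    simp only [mem_mSet_iff Ω.mono hcl, pathLen_nonneg, forall_const]
  refine ⟨⟨fun h t ht => hM.1 (h.2.2.2 t ht),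
      fun h => ⟨zero_le_one, hγ0, hlip, fun t ht => hM.2 (h t ht)⟩⟩, ?_, ?_⟩
  · exact forall₂_congr fun t _ => notMem_iff_exists_of_eq_on_Ioo (ucFun_mono Ω.mono)
      htop (fun n l h₁ h₂ => (hstruct n l h₁ h₂).1) (h0 ▸ pathLen_nonneg γ t) (γ t)
  · intro γ' t₁
    rw [OmAllowed, OmAllowed, mSet_ucFun Ω.mono hcl]

/-- Characterization of `Ω`-allowed paths. -/
theorem allowed_characterization (Ω : DFS) (γ : ℝ → ℂ) (hγ0 : γ 0 = 0)
    (hlip : ∃ K, LipschitzOnWith K γ (Set.Icc 0 1))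
    (Lseq : ℕ → ℝ) (h0 : Lseq 0 = 0) (hmono : StrictMono Lseq)
    (htop : Filter.Tendsto Lseq Filter.atTop Filter.atTop)
    (hstruct : ∀ n : ℕ, ∀ l : ℝ, Lseq n < l → l < Lseq (n + 1) →
      ucFun Ω.sets (Lseq n) = ucFun Ω.sets l ∧ ucFun Ω.sets l = Ω.sets l) :
    (OmAllowed Ω.sets γ 1 ↔
      ∀ t ∈ Set.Icc (0:ℝ) 1, γ t ∉ ucFun Ω.sets (pathLen γ t)) ∧
    ((∀ t ∈ Set.Icc (0:ℝ) 1, γ t ∉ ucFun Ω.sets (pathLen γ t)) ↔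
      ∀ t ∈ Set.Icc (0:ℝ) 1, ∃ n : ℕ,
        pathLen γ t < Lseq (n + 1) ∧ γ t ∉ ucFun Ω.sets (Lseq n)) ∧
    (∀ (γ' : ℝ → ℂ) (t₁ : ℝ),
      OmAllowed Ω.sets γ' t₁ ↔ OmAllowed (ucFun Ω.sets) γ' t₁) :=
  allowed_characterization_general Ω γ hγ0 hlip Lseq h0 htop hstruct
end

section
/- (Path modification lemma.) Suppose a holomorphic germ φ at 0 ∈ ℂ can be analytically continued along a Lipschitz path γ: [0,t*] → ℂ with γ(0) = 0, and let F be a finite subset of ℂ. Then for each ε > 0 there exists a Lipschitz path γ*: [0,t*] → ℂ with γ*(0) = 0 such that γ*((0,t*)) ⊆ ℂ \ F, the length of γ* is less than the length of γ plus ε, γ*(t*) = γ(t*), φ can be analytically continued along γ*, and the analytic continuations of φ along γ and γ* coincide (as germs at γ(t*)). -/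
open MeasureTheory Metric Set

open Filter
open scoped NNReal ENNReal Topology

/-!
Take `γ' t = γ t + min t (t₁ - t) * c` with `c ∈ ℂ` small. For each `p ∈ F`, the values of `c`
for which `γ'` meets `p` at some `t ∈ (0, t₁)` form the image of `(0, t₁)` under the locally
Lipschitz map `t ↦ (p - γ t) / min t (t₁ - t)`, a set of Hausdorff dimension at most `1`; hence
admissible `c` are dense in `ℂ`. The endpoints do not move and the length grows by at most
`‖c‖ t₁`. By compactness, the continuation along `γ` can be given discs of one fixed radius `ρ`;
the same germs then continue `φ` along any path with the same endpoint staying `ρ / 2`-close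
to `γ`.
-/

section Variation

lemma eVariationOn_add_le {α E : Type*} [LinearOrder α] [SeminormedAddCommGroup E]
    (f g : α → E) (s : Set α) :
    eVariationOn (f + g) s ≤ eVariationOn f s + eVariationOn g s := by
  refine iSup_le fun ⟨n, u, hu, us⟩ => ?_
  calc ∑ i ∈ Finset.range n, edist ((f + g) (u (i + 1))) ((f + g) (u i))
      ≤ ∑ i ∈ Finset.range n,
          (edist (f (u (i + 1))) (f (u i)) + edist (g (u (i + 1))) (g (u i))) :=
        Finset.sum_le_sum fun i _ => edist_add_add_le _ _ _ _
    _ ≤ eVariationOn f s + eVariationOn g s := by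
        rw [Finset.sum_add_distrib]
        exact add_le_add (eVariationOn.sum_le (f := f) (n := n) hu us)
          (eVariationOn.sum_le (f := g) (n := n) hu us)

lemma LipschitzOnWith.eVariationOn_Icc_le {E : Type*} [PseudoEMetricSpace E] {f : ℝ → E}
    {K : ℝ≥0} {a b : ℝ} (h : LipschitzOnWith K f (Icc a b)) :
    eVariationOn f (Icc a b) ≤ K * ENNReal.ofReal (b - a) := by
  simpa using h.comp_eVariationOn_le (g := id) (mapsTo_id _)

lemma pathLen_add_le {γ δ : ℝ → ℂ} {t : ℝ} (hγ : BoundedVariationOn γ (Icc 0 t))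
    (hδ : BoundedVariationOn δ (Icc 0 t)) :
    pathLen (γ + δ) t ≤ pathLen γ t + pathLen δ t := by
  unfold pathLen
  rw [← ENNReal.toReal_add hγ hδ]
  exact ENNReal.toReal_mono (ENNReal.add_ne_top.2 ⟨hγ, hδ⟩) (eVariationOn_add_le γ δ _)

lemma LipschitzOnWith.boundedVariationOn_Icc {E : Type*} [PseudoEMetricSpace E] {f : ℝ → E}
    {K : ℝ≥0} {a b : ℝ} (h : LipschitzOnWith K f (Icc a b)) : BoundedVariationOn f (Icc a b) :=
  ne_top_of_le_ne_top (by finiteness) h.eVariationOn_Icc_le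

lemma LipschitzOnWith.pathLen_le {γ : ℝ → ℂ} {K : ℝ≥0} {t : ℝ}
    (h : LipschitzOnWith K γ (Icc 0 t)) (ht : 0 ≤ t) : pathLen γ t ≤ K * t := by
  have := ENNReal.toReal_mono (by finiteness) h.eVariationOn_Icc_le
  rwa [ENNReal.toReal_mul, ENNReal.coe_toReal, sub_zero, ENNReal.toReal_ofReal ht] at this

end Variation

section Tent

def tent (a t : ℝ) : ℝ := min t (a - t)

lemma lipschitzWith_tent (a : ℝ) : LipschitzWith 1 (tent a) :=
  (LipschitzWith.id.min ((LipschitzWith.const a).sub LipschitzWith.id)).weaken (by simp)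

lemma tent_zero {a : ℝ} (ha : 0 ≤ a) : tent a 0 = 0 := by simp [tent, ha]

lemma tent_self {a : ℝ} (ha : 0 ≤ a) : tent a a = 0 := by simp [tent, ha]

lemma tent_pos {a t : ℝ} (ht : t ∈ Ioo 0 a) : 0 < tent a t :=
  lt_min ht.1 (sub_pos.2 ht.2)

lemma tent_mem_Icc {a t : ℝ} (ht : t ∈ Icc 0 a) : tent a t ∈ Icc 0 a :=
  ⟨le_min ht.1 (sub_nonneg.2 ht.2), (min_le_left _ _).trans ht.2⟩

lemma lipschitzWith_tent_mul (a : ℝ) (c : ℂ) :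
    LipschitzWith ‖c‖₊ (fun t => (tent a t : ℂ) * c) := by
  have hmul : LipschitzWith ‖c‖₊ (fun x : ℝ => (x : ℂ) * c) :=
    LipschitzWith.of_dist_le_mul fun x y => by
      rw [dist_eq_norm, ← sub_mul, ← Complex.ofReal_sub, norm_mul, Complex.norm_real,
        coe_nnnorm, mul_comm, Real.dist_eq, Real.norm_eq_abs]
  simpa [Function.comp_def] using hmul.comp (lipschitzWith_tent a)

lemma norm_tent_mul_le {a t : ℝ} (ht : t ∈ Icc 0 a) (c : ℂ) : ‖(tent a t : ℂ) * c‖ ≤ ‖c‖ * a := by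
  have h := tent_mem_Icc ht
  rw [norm_mul, Complex.norm_real, Real.norm_of_nonneg h.1, mul_comm]
  exact mul_le_mul_of_nonneg_left h.2 (norm_nonneg c)

end Tent

section Avoidance

lemma LipschitzOnWith.locallyLipschitzOn {α β : Type*} [PseudoEMetricSpace α]
    [PseudoEMetricSpace β] {f : α → β} {K : ℝ≥0} {s : Set α} (h : LipschitzOnWith K f s) :
    LocallyLipschitzOn s f :=
  fun _ _ => ⟨K, s, self_mem_nhdsWithin, h⟩

lemma LocallyLipschitzOn.div₀ {α 𝕜 : Type*} [PseudoMetricSpace α] [RCLike 𝕜] {s : Set α}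
    {f g : α → 𝕜} (hf : LocallyLipschitzOn s f) (hg : LocallyLipschitzOn s g)
    (hg₀ : ∀ x ∈ s, g x ≠ 0) : LocallyLipschitzOn s fun x => f x / g x := by
  intro x hx
  obtain ⟨Kf, U, hU, hfU⟩ := hf hx
  obtain ⟨Kg, V, hV, hgV⟩ := hg hx
  have hP : LipschitzOnWith (max Kf Kg) (fun y => (f y, g y)) (U ∩ V) :=
    (hfU.mono inter_subset_left).prodMk (hgV.mono inter_subset_right)
  obtain ⟨Kq, W, hW, hqW⟩ := (contDiffAt_fst.div contDiffAt_snd (hg₀ x hx) :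
    ContDiffAt 𝕜 1 (fun q : 𝕜 × 𝕜 => q.1 / q.2) (f x, g x)).exists_lipschitzOnWith
  have hUV : U ∩ V ∈ 𝓝[s] x := inter_mem hU hV
  have hPx : ContinuousWithinAt (fun y => (f y, g y)) s x :=
    (hP.continuousOn _ (mem_of_mem_nhdsWithin hx hUV)).mono_of_mem_nhdsWithin hUV
  exact ⟨Kq * max Kf Kg, U ∩ V ∩ (fun y => (f y, g y)) ⁻¹' W,
    inter_mem hUV (hPx.preimage_mem_nhdsWithin hW),
    hqW.comp (hP.mono inter_subset_left) fun y hy => hy.2⟩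

lemma dense_setOf_forall_add_mul_notMem {s : Set ℝ} {f g : ℝ → ℂ}
    (hf : LocallyLipschitzOn s f) (hg : LocallyLipschitzOn s g) (hg₀ : ∀ t ∈ s, g t ≠ 0)
    {F : Set ℂ} (hF : F.Finite) : Dense {c : ℂ | ∀ t ∈ s, f t + g t * c ∉ F} := by
  set B : Set ℂ := ⋃ p ∈ F, (fun t => (p - f t) / g t) '' s
  have hB : dimH B < Module.finrank ℝ ℂ := by
    rw [Complex.finrank_real_complex, dimH_bUnion hF.countable]
    refine lt_of_le_of_lt ?_ (by norm_num : (1 : ℝ≥0∞) < (2 : ℕ))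
    refine iSup₂_le fun p _ => ?_
    calc dimH ((fun t => (p - f t) / g t) '' s)
        ≤ dimH s := dimH_image_le_of_locally_lipschitzOn
          (((LocallyLipschitz.const p).locallyLipschitzOn.sub hf).div₀ hg hg₀)
      _ ≤ dimH (univ : Set ℝ) := dimH_mono (subset_univ s)
      _ = 1 := Real.dimH_univ
  refine Dense.mono (fun c (hc : c ∉ B) t ht htF => hc ?_) (dense_compl_of_dimH_lt_finrank hB)
  refine mem_biUnion htF ⟨t, ht, ?_⟩
  field_simp [hg₀ t ht]
  ring

lemma exists_norm_lt_forall_add_tent_mul_notMem {γ : ℝ → ℂ} {t₁ : ℝ}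
    (hγ : LocallyLipschitzOn (Ioo 0 t₁) γ) {F : Set ℂ} (hF : F.Finite) {η : ℝ} (hη : 0 < η) :
    ∃ c : ℂ, ‖c‖ < η ∧ ∀ t ∈ Ioo 0 t₁, γ t + tent t₁ t * c ∉ F := by
  have htent : LipschitzWith 1 fun t => (tent t₁ t : ℂ) := by
    simpa [Function.comp_def] using Complex.isometry_ofReal.lipschitz.comp (lipschitzWith_tent t₁)
  obtain ⟨c, hcF, hc⟩ := (dense_setOf_forall_add_mul_notMem hγ
    htent.locallyLipschitz.locallyLipschitzOn
    (fun t ht => Complex.ofReal_ne_zero.2 (tent_pos ht).ne') hF).exists_mem_open isOpen_ball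
    (nonempty_ball.2 hη)
  exact ⟨c, mem_ball_zero_iff.1 hc, hcF⟩

end Avoidance

section Continuation

lemma eqOn_ball_inter_ball_of_eventuallyEq {E : Type*} [NormedAddCommGroup E] [NormedSpace ℂ E]
    [CompleteSpace E] {f g : ℂ → E} {a b z : ℂ} {r s : ℝ}
    (hf : DifferentiableOn ℂ f (ball a r)) (hg : DifferentiableOn ℂ g (ball b s))
    (hz : z ∈ ball a r ∩ ball b s) (hfg : f =ᶠ[𝓝 z] g) : EqOn f g (ball a r ∩ ball b s) :=
  ((hf.analyticOnNhd isOpen_ball).mono inter_subset_left).eqOn_of_preconnected_of_eventuallyEq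
    ((hg.analyticOnNhd isOpen_ball).mono inter_subset_right)
    ((convex_ball a r).inter (convex_ball b s)).isPreconnected hz hfg

/-- The data `(G, r)` witnessing `ContinuesAlongTo φ γ t₁ ψ`. -/
def ContinuesAlongToVia (φ : ℂ → ℂ) (γ : ℝ → ℂ) (t₁ : ℝ) (ψ : ℂ → ℂ) (G : ℝ → ℂ → ℂ)
    (r : ℝ → ℝ) : Prop :=
  (∀ t ∈ Icc 0 t₁, 0 < r t ∧ DifferentiableOn ℂ (G t) (ball (γ t) (r t))) ∧
    (∀ t ∈ Icc 0 t₁, ∀ᶠ s in 𝓝[Icc 0 t₁] t,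
        EqOn (G s) (G t) (ball (γ s) (r s) ∩ ball (γ t) (r t))) ∧
    (∀ᶠ z in 𝓝 0, G 0 z = φ z) ∧
    (∀ᶠ z in 𝓝 (γ t₁), G t₁ z = ψ z)

variable {φ ψ : ℂ → ℂ} {γ : ℝ → ℂ} {t₁ : ℝ}

lemma ContinuesAlongToVia.exists_isOpen_eventuallyEq {G : ℝ → ℂ → ℂ} {r : ℝ → ℝ}
    (h : ContinuesAlongToVia φ γ t₁ ψ G r) (hγ : ContinuousOn γ (Icc 0 t₁)) {t : ℝ}
    (ht : t ∈ Icc 0 t₁) : ∃ U : Set ℝ, IsOpen U ∧ t ∈ U ∧ ∀ s ∈ U ∩ Icc 0 t₁,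
      dist (γ s) (γ t) < r t / 4 ∧ G t =ᶠ[𝓝 (γ s)] G s := by
  obtain ⟨hG, hcompat, -, -⟩ := h
  have hr := (hG t ht).1
  have hnear : ∀ᶠ s in 𝓝[Icc 0 t₁] t, dist (γ s) (γ t) < r t / 4 :=
    Metric.tendsto_nhds.mp (hγ t ht) _ (by positivity)
  obtain ⟨U, hUo, hUt, hU⟩ := mem_nhdsWithin.mp ((hcompat t ht).and hnear)
  refine ⟨U, hUo, hUt, fun s hs => ⟨(hU hs).2, ?_⟩⟩
  have hγs : γ s ∈ ball (γ s) (r s) ∩ ball (γ t) (r t) :=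
    ⟨mem_ball_self (hG s hs.2).1, by rw [mem_ball]; linarith [(hU hs).2]⟩
  exact (eventuallyEq_of_mem ((isOpen_ball.inter isOpen_ball).mem_nhds hγs) (hU hs).1).symm

/-- By compactness of `[0, t₁]` finitely many of the discs suffice, and the identity theorem
glues the corresponding germs. -/
theorem ContinuesAlongTo.exists_via_const_radius (h : ContinuesAlongTo φ γ t₁ ψ)
    (hγ : ContinuousOn γ (Icc 0 t₁)) (hγ0 : γ 0 = 0) (ht : 0 ≤ t₁) :
    ∃ G ρ, ContinuesAlongToVia φ γ t₁ ψ G fun _ => ρ := by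
  obtain ⟨F, r, hF⟩ : ∃ F r, ContinuesAlongToVia φ γ t₁ ψ F r := h
  set I := Icc 0 t₁
  choose! U hUo hUt hU using fun t (ht : t ∈ I) => hF.exists_isOpen_eventuallyEq hγ ht
  obtain ⟨T, hTI, hIT⟩ :=
    isCompact_Icc.elim_nhds_subcover U fun t ht => (hUo t ht).mem_nhds (hUt t ht)
  choose! idx hidxT hidxU using fun s (hs : s ∈ I) => by simpa using hIT hs
  have hr : ∀ i ∈ T, 0 < r i := fun i hi => (hF.1 i (hTI i hi)).1
  obtain ⟨ρ, hρT, hρ⟩ : ∃ ρ, (∀ i ∈ T, ρ ≤ r i / 2) ∧ 0 < ρ :=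
    (((eventually_all_finset T).2 fun i hi =>
      (eventually_le_nhds (half_pos (hr i hi))).filter_mono nhdsWithin_le_nhds).and
      (self_mem_nhdsWithin : Ioi (0 : ℝ) ∈ 𝓝[>] 0)).exists
  have hnear : ∀ s ∈ I, ∀ i ∈ T, s ∈ U i → γ s ∈ ball (γ i) (r i) := fun s hs i hi hsi => by
    rw [mem_ball]; linarith [(hU i (hTI i hi) s ⟨hsi, hs⟩).1, hr i hi]
  have hagree : ∀ s ∈ I, ∀ i ∈ T, ∀ j ∈ T, s ∈ U i → s ∈ U j →
      EqOn (F i) (F j) (ball (γ i) (r i) ∩ ball (γ j) (r j)) := fun s hs i hi j hj hsi hsj =>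
    eqOn_ball_inter_ball_of_eventuallyEq (hF.1 i (hTI i hi)).2 (hF.1 j (hTI j hj)).2
      ⟨hnear s hs i hi hsi, hnear s hs j hj hsj⟩
      ((hU i (hTI i hi) s ⟨hsi, hs⟩).2.trans (hU j (hTI j hj) s ⟨hsj, hs⟩).2.symm)
  have hball : ∀ t ∈ I, ball (γ t) ρ ⊆ ball (γ (idx t)) (r (idx t)) := fun t ht z hz => by
    have := (hU _ (hTI _ (hidxT t ht)) t ⟨hidxU t ht, ht⟩).1
    rw [mem_ball] at hz ⊢
    linarith [dist_triangle z (γ t) (γ (idx t)), hρT _ (hidxT t ht), hr _ (hidxT t ht)]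
  have hgerm : ∀ t ∈ I, F (idx t) =ᶠ[𝓝 (γ t)] F t := fun t ht =>
    (hU _ (hTI _ (hidxT t ht)) t ⟨hidxU t ht, ht⟩).2
  refine ⟨fun t => F (idx t), ρ,
    fun t ht => ⟨hρ, (hF.1 _ (hTI _ (hidxT t ht))).2.mono (hball t ht)⟩, fun t ht => ?_, ?_,
    (hgerm t₁ (right_mem_Icc.2 ht)).trans hF.2.2.2⟩
  · filter_upwards [mem_nhdsWithin_of_mem_nhds
      ((hUo _ (hTI _ (hidxT t ht))).mem_nhds (hidxU t ht)), self_mem_nhdsWithin] with s hsU hs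
    exact (hagree s hs _ (hidxT s hs) _ (hidxT t ht) (hidxU s hs) hsU).mono
      (inter_subset_inter (hball s hs) (hball t ht))
  · have h0 := hgerm 0 (left_mem_Icc.2 ht)
    rw [hγ0] at h0
    exact h0.trans hF.2.2.1

lemma ContinuesAlongToVia.of_forall_dist_lt {G : ℝ → ℂ → ℂ} {ρ : ℝ}
    (h : ContinuesAlongToVia φ γ t₁ ψ G fun _ => ρ) {γ' : ℝ → ℂ}
    (hclose : ∀ t ∈ Icc 0 t₁, dist (γ' t) (γ t) < ρ / 2) (hend : γ' t₁ = γ t₁) :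
    ContinuesAlongToVia φ γ' t₁ ψ G fun _ => ρ / 2 := by
  obtain ⟨hG, hcompat, h0, h1⟩ := h
  have hball : ∀ t ∈ Icc 0 t₁, ball (γ' t) (ρ / 2) ⊆ ball (γ t) ρ := fun t ht z hz => by
    rw [mem_ball] at hz ⊢
    linarith [dist_triangle z (γ' t) (γ t), hclose t ht]
  refine ⟨fun t ht => ⟨half_pos (hG t ht).1, (hG t ht).2.mono (hball t ht)⟩, fun t ht => ?_,
    h0, hend ▸ h1⟩
  filter_upwards [hcompat t ht, self_mem_nhdsWithin] with s hst hs
  exact hst.mono (inter_subset_inter (hball s hs) (hball t ht))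

theorem ContinuesAlongTo.exists_pos_forall_dist_lt (h : ContinuesAlongTo φ γ t₁ ψ)
    (hγ : ContinuousOn γ (Icc 0 t₁)) (hγ0 : γ 0 = 0) (ht : 0 ≤ t₁) :
    ∃ δ > 0, ∀ γ' : ℝ → ℂ, γ' t₁ = γ t₁ → (∀ t ∈ Icc 0 t₁, dist (γ' t) (γ t) < δ) →
      ContinuesAlongTo φ γ' t₁ ψ := by
  obtain ⟨G, ρ, hG⟩ := h.exists_via_const_radius hγ hγ0 ht
  exact ⟨ρ / 2, half_pos (hG.1 0 (left_mem_Icc.2 ht)).1, fun γ' hend hclose =>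
    ⟨G, _, hG.of_forall_dist_lt hclose hend⟩⟩

end Continuation

theorem path_modification_general (φ : ℂ → ℂ)
    (γ : ℝ → ℂ) (t₁ : ℝ) (ht : 0 ≤ t₁) (hγ0 : γ 0 = 0)
    (hlip : ∃ K, LipschitzOnWith K γ (Set.Icc 0 t₁))
    (hcont : ContinuesAlong φ γ t₁)
    (F : Set ℂ) (hF : F.Finite) (ε : ℝ) (hε : 0 < ε) :
    ∃ γ' : ℝ → ℂ, γ' 0 = 0 ∧ (∃ K, LipschitzOnWith K γ' (Set.Icc 0 t₁)) ∧
      (∀ t ∈ Set.Ioo (0:ℝ) t₁, γ' t ∉ F) ∧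
      pathLen γ' t₁ < pathLen γ t₁ + ε ∧
      γ' t₁ = γ t₁ ∧
      ∃ ψ : ℂ → ℂ, ContinuesAlongTo φ γ t₁ ψ ∧ ContinuesAlongTo φ γ' t₁ ψ := by
  obtain ⟨ψ, hψ⟩ := hcont
  obtain ⟨K, hK⟩ := hlip
  obtain ⟨δ, hδ, hstable⟩ := hψ.exists_pos_forall_dist_lt hK.continuousOn hγ0 ht
  obtain ⟨c, hc, hcF⟩ := exists_norm_lt_forall_add_tent_mul_notMem
    (hK.mono Ioo_subset_Icc_self).locallyLipschitzOn hF (by positivity : 0 < min δ ε / (t₁ + 1))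
  have hct : ‖c‖ * t₁ < min δ ε := by
    rw [lt_div_iff₀ (by positivity)] at hc
    nlinarith [norm_nonneg c]
  set p : ℝ → ℂ := fun t => (tent t₁ t : ℂ) * c
  have hp : LipschitzWith ‖c‖₊ p := lipschitzWith_tent_mul t₁ c
  have hend : (γ + p) t₁ = γ t₁ := by simp [p, tent_self ht]
  refine ⟨γ + p, by simp [p, hγ0, tent_zero ht], ⟨_, hK.add hp.lipschitzOnWith⟩, hcF, ?_, hend,
    ψ, hψ, hstable _ hend fun t ht' => ?_⟩
  · calc pathLen (γ + p) t₁ ≤ pathLen γ t₁ + pathLen p t₁ :=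
          pathLen_add_le hK.boundedVariationOn_Icc hp.lipschitzOnWith.boundedVariationOn_Icc
      _ ≤ pathLen γ t₁ + ‖c‖ * t₁ := by
          gcongr; simpa using hp.lipschitzOnWith.pathLen_le ht
      _ < pathLen γ t₁ + ε := by linarith [min_le_right δ ε]
  · rw [Pi.add_apply, dist_self_add_left]
    linarith [norm_tent_mul_le ht' c, min_le_left δ ε]

/-- Path modification lemma: a path of analytic continuation can be modified
to avoid a finite set (except at its endpoints), with an arbitrarily small
increase of length, keeping the same endpoint and the same continuation. -/
theorem path_modification (φ : ℂ → ℂ) (hφ : HolGermAtZero φ)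
    (γ : ℝ → ℂ) (t₁ : ℝ) (ht : 0 ≤ t₁) (hγ0 : γ 0 = 0)
    (hlip : ∃ K, LipschitzOnWith K γ (Set.Icc 0 t₁))
    (hcont : ContinuesAlong φ γ t₁)
    (F : Set ℂ) (hF : F.Finite) (ε : ℝ) (hε : 0 < ε) :
    ∃ γ' : ℝ → ℂ, γ' 0 = 0 ∧ (∃ K, LipschitzOnWith K γ' (Set.Icc 0 t₁)) ∧
      (∀ t ∈ Set.Ioo (0:ℝ) t₁, γ' t ∉ F) ∧
      pathLen γ' t₁ < pathLen γ t₁ + ε ∧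
      γ' t₁ = γ t₁ ∧
      ∃ ψ : ℂ → ℂ, ContinuesAlongTo φ γ t₁ ψ ∧ ContinuesAlongTo φ γ' t₁ ψ :=
  path_modification_general φ γ t₁ ht hγ0 hlip hcont F hF ε hε
end

section
/- For a d.f.s. Ω, the space of Ω-continuable germs equals the space of entire functions if and only if for every L > 0 there exists L′ > L such that Ω_{L′} ⊆ { ω ∈ ℂ : |ω| < L }. -/
open MeasureTheory Metric Set

/-! As the sets `Ω_L` are finite, the condition says that `Ω̃_L ⊆ {|ω| < L}` for every `L > 0`.
Then the closure of `S_Ω` lies strictly inside the cone `|ω| < λ`, so each ray `t ↦ t • ζ` is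
`Ω`-allowed: its arclength `t |ζ|` is the modulus of its endpoint. A continuable germ thus
continues along the rays through all points of its circle of convergence; gluing these local
continuations holomorphically extends the germ to a larger disk, so its radius of convergence
is infinite.

Conversely, if some `ω` with `|ω| ≥ L` lies in `Ω̃_L`, then no allowed path can reach `ω`
(it would have length at least `|ω|` there), so `z ↦ (z - ω)⁻¹` is `Ω`-continuable but
not entire. -/

open Filter Topology

namespace DFS

variable (Ω : DFS)

theorem ucFun_mono {L L' : ℝ} (h : L ≤ L') : ucFun Ω.sets L ⊆ ucFun Ω.sets L' := by
  intro ω hω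
  simp only [ucFun, mem_iInter] at hω ⊢
  exact fun ε hε => Ω.mono (by linarith) (hω ε hε)

theorem pos_of_mem_ucFun {L : ℝ} {ω : ℂ} (h : ω ∈ ucFun Ω.sets L) : 0 < L := by
  obtain ⟨δ, hδ, hδe⟩ := Ω.empty_small
  by_contra! hL
  have : ω ∈ Ω.sets (L + (δ - L)) := mem_iInter₂.1 h _ (by linarith)
  rwa [add_sub_cancel, hδe] at this

theorem closure_singSet :
    closure (SingSet Ω.sets) = {p | 0 ≤ p.1 ∧ p.2 ∈ ucFun Ω.sets p.1} := by
  ext ⟨L, ω⟩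
  refine ⟨fun hp => ⟨?_, mem_iInter₂.2 fun ε hε => ?_⟩, fun ⟨hL, hω⟩ => ?_⟩
  · exact closure_minimal (fun p hp => hp.1) (isClosed_le continuous_const continuous_fst) hp
  · have hnear : ∀ᶠ p : ℝ × ℂ in 𝓝 (L, ω), p.1 < L + ε :=
      continuous_fst.continuousAt.eventually_lt continuousAt_const (by simpa using hε)
    refine ((Ω.finite _).isClosed.preimage continuous_snd).mem_of_frequently_of_tendsto
      ((mem_closure_iff_frequently.1 hp).and_eventually hnear |>.mono ?_) tendsto_id
    exact fun p ⟨hpS, hp⟩ => Ω.mono hp.le hpS.2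
  · have hlim : Tendsto (fun ε => (L + ε, ω)) (𝓝[>] 0) (𝓝 (L, ω)) :=
      ((continuous_const.add continuous_id).prodMk continuous_const).continuousWithinAt.tendsto
        |>.mono_right (by simp)
    refine mem_closure_of_tendsto hlim ?_
    filter_upwards [self_mem_nhdsWithin] with ε (hε : 0 < ε)
    exact ⟨by linarith, mem_iInter₂.1 hω ε hε⟩

theorem exists_sets_subset_iff (L : ℝ) (s : Set ℂ) :
    (∃ L' > L, Ω.sets L' ⊆ s) ↔ ucFun Ω.sets L ⊆ s := by
  refine ⟨fun ⟨L', hL', hs⟩ => ?_, fun hs => ?_⟩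
  · have : ucFun Ω.sets L ⊆ Ω.sets (L + (L' - L)) := iInter₂_subset _ (by linarith)
    rw [add_sub_cancel] at this
    exact this.trans hs
  · by_contra! hne
    let t : Ioi (0 : ℝ) → Set ℂ := fun ε => Ω.sets (L + ε) \ s
    have htn : ∀ ε, (t ε).Nonempty := fun ε =>
      sdiff_nonempty.2 (hne _ (lt_add_of_pos_right L ε.2))
    have htd : Directed (· ⊇ ·) t :=
      Monotone.directed_ge fun ε ε' h => sdiff_subset_sdiff_left (Ω.mono (by simpa using h))
    obtain ⟨ω, hω⟩ := IsCompact.nonempty_iInter_of_directed_nonempty_isCompact_isClosed t htd htn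
      (fun ε => ((Ω.finite _).sdiff).isCompact) (fun ε => ((Ω.finite _).sdiff).isClosed)
    rw [mem_iInter] at hω
    exact (hω ⟨1, mem_Ioi.2 one_pos⟩).2 (hs (mem_iInter₂.2 fun ε hε => (hω ⟨ε, hε⟩).1))

end DFS

theorem eVariationOn_Icc_le_of_lipschitzOnWith {E : Type*} [PseudoEMetricSpace E] {γ : ℝ → E}
    {K : NNReal} {a b : ℝ} (hK : LipschitzOnWith K γ (Icc a b)) :
    eVariationOn γ (Icc a b) ≤ K * ENNReal.ofReal (b - a) := by
  rcases le_or_gt a b with hab | hab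
  · calc eVariationOn (γ ∘ id) (Icc a b) ≤ K * eVariationOn id (Icc a b) :=
          hK.comp_eVariationOn_le (mapsTo_id _)
      _ ≤ K * ENNReal.ofReal (b - a) := by
          gcongr
          simp
  · simp [Icc_eq_empty_of_lt hab]

theorem pathLen_le_of_lipschitzOnWith {γ : ℝ → ℂ} {K : NNReal} {t : ℝ}
    (hK : LipschitzOnWith K γ (Icc 0 t)) (ht : 0 ≤ t) : pathLen γ t ≤ K * t := by
  refine ENNReal.toReal_le_of_le_ofReal (by positivity) ?_
  simpa [ENNReal.ofReal_mul] using eVariationOn_Icc_le_of_lipschitzOnWith hK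

theorem norm_sub_le_pathLen {γ : ℝ → ℂ} {K : NNReal} {t : ℝ}
    (hK : LipschitzOnWith K γ (Icc 0 t)) (ht : 0 ≤ t) : ‖γ t - γ 0‖ ≤ pathLen γ t := by
  have hfin : eVariationOn γ (Icc 0 t) ≠ ⊤ :=
    ne_top_of_le_ne_top (by finiteness) (eVariationOn_Icc_le_of_lipschitzOnWith hK)
  rw [← dist_eq_norm, dist_comm, dist_edist]
  exact ENNReal.toReal_mono hfin
    (eVariationOn.edist_le γ (left_mem_Icc.2 ht) (right_mem_Icc.2 ht))

theorem lipschitzWith_smul_right (ζ : ℂ) : LipschitzWith ‖ζ‖₊ (fun t : ℝ => t • ζ) :=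
  LipschitzWith.of_dist_le_mul fun s t => by
    rw [dist_eq_norm, ← sub_smul, norm_smul, Real.dist_eq, Real.norm_eq_abs, coe_nnnorm,
      mul_comm]

theorem eqOn_ball_inter_ball_of_eventuallyEq_s13 {f g : ℂ → ℂ} {c₁ c₂ : ℂ} {r₁ r₂ : ℝ}
    (hf : DifferentiableOn ℂ f (ball c₁ r₁)) (hg : DifferentiableOn ℂ g (ball c₂ r₂)) {w : ℂ}
    (hw : w ∈ ball c₁ r₁ ∩ ball c₂ r₂) (hfg : f =ᶠ[𝓝 w] g) :
    EqOn f g (ball c₁ r₁ ∩ ball c₂ r₂) :=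
  have hU : IsOpen (ball c₁ r₁ ∩ ball c₂ r₂) := isOpen_ball.inter isOpen_ball
  ((hf.mono inter_subset_left).analyticOnNhd hU).eqOn_of_preconnected_of_eventuallyEq
    ((hg.mono inter_subset_right).analyticOnNhd hU)
    ((convex_ball c₁ r₁).inter (convex_ball c₂ r₂)).isPreconnected hw hfg

theorem ball_inter_ball_inter_ball_nonempty {E : Type*} [NormedAddCommGroup E] [NormedSpace ℝ E]
    {c₁ c₂ : E} {r₁ r₂ ρ : ℝ} (hρ : 0 < ρ) (h₁ : ‖c₁‖ ≤ ρ) (h₂ : ‖c₂‖ ≤ ρ)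
    (h : (ball c₁ r₁ ∩ ball c₂ r₂).Nonempty) : (ball 0 ρ ∩ (ball c₁ r₁ ∩ ball c₂ r₂)).Nonempty := by
  obtain ⟨z, hz₁, hz₂⟩ := h
  have hr₁ : 0 < r₁ := pos_of_mem_ball hz₁
  have hr₂ : 0 < r₂ := pos_of_mem_ball hz₂
  have hd : dist c₁ c₂ < r₁ + r₂ :=
    (dist_triangle_right c₁ c₂ z).trans_lt (add_lt_add (mem_ball'.1 hz₁) (mem_ball'.1 hz₂))
  -- the point of the segment `[c₁, c₂]` splitting it in the ratio `r₁ : r₂`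
  set θ := r₁ / (r₁ + r₂)
  have hθ : θ ∈ Icc (0 : ℝ) 1 :=
    ⟨by positivity, (div_le_one (by positivity)).2 (by linarith)⟩
  have hy : AffineMap.lineMap c₁ c₂ θ ∈ closedBall (0 : E) ρ ∩ (ball c₁ r₁ ∩ ball c₂ r₂) := by
    refine ⟨(convex_closedBall 0 ρ).lineMap_mem (by simpa using h₁) (by simpa using h₂) hθ, ?_, ?_⟩
    · rw [mem_ball, dist_lineMap_left, Real.norm_of_nonneg hθ.1]
      calc θ * dist c₁ c₂ < θ * (r₁ + r₂) := by gcongr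
        _ = r₁ := div_mul_cancel₀ _ (by positivity)
    · rw [mem_ball, dist_lineMap_right, Real.norm_of_nonneg (sub_nonneg.2 hθ.2)]
      calc (1 - θ) * dist c₁ c₂ < (1 - θ) * (r₁ + r₂) := by
            gcongr; exact sub_pos.2 ((div_lt_one (by positivity)).2 (by linarith))
        _ = r₂ := by simp only [θ]; field_simp; ring
  rw [← closure_ball 0 hρ.ne'] at hy
  exact (closure_inter_open_nonempty_iff (isOpen_ball.inter isOpen_ball)).1 ⟨_, hy⟩

theorem exists_extension_of_continuesAlong_ray {φ g : ℂ → ℂ} {ζ : ℂ} (hζ : ζ ≠ 0)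
    (hφ : ContinuesAlong φ (fun t : ℝ => t • ζ) 1) (hg : DifferentiableOn ℂ g (ball 0 ‖ζ‖))
    (hφg : φ =ᶠ[𝓝 0] g) :
    ∃ h : ℂ → ℂ, ∃ r > 0, DifferentiableOn ℂ h (ball ζ r) ∧ EqOn h g (ball ζ r ∩ ball 0 ‖ζ‖) := by
  obtain ⟨-, F, r, hFr, hcompat, hF0, -⟩ := hφ
  have hρ : 0 < ‖ζ‖ := norm_pos_iff.2 hζ
  let P : ℝ → Prop := fun t => EqOn (F t) g (ball (t • ζ) (r t) ∩ ball 0 ‖ζ‖)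
  have hnorm : ∀ t ∈ Icc (0 : ℝ) 1, ‖t • ζ‖ ≤ ‖ζ‖ := fun t ht => by
    rw [norm_smul, Real.norm_of_nonneg ht.1]
    exact mul_le_of_le_one_left (norm_nonneg ζ) ht.2
  -- discs at nearby parameters overlap inside the disk of `g`, so agreement with `g` passes on
  have hlocal : ∀ t ∈ Icc (0 : ℝ) 1, ∀ᶠ s in 𝓝[Icc 0 1] t, (P t → P s) ∧ (P s → P t) := by
    intro t ht
    have hnear : ∀ᶠ s in 𝓝[Icc 0 1] t, s • ζ ∈ ball (t • ζ) (r t) :=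
      nhdsWithin_le_nhds <| (continuous_id.smul continuous_const).continuousAt.preimage_mem_nhds
        (isOpen_ball.mem_nhds (mem_ball_self (hFr t ht).1))
    filter_upwards [hcompat t ht, hnear, self_mem_nhdsWithin] with s hst hs hsI
    obtain ⟨w, hw⟩ := ball_inter_ball_inter_ball_nonempty hρ (hnorm s hsI) (hnorm t ht)
      ⟨s • ζ, mem_ball_self (hFr s hsI).1, hs⟩
    have hW := (isOpen_ball.inter (isOpen_ball.inter isOpen_ball)).mem_nhds hw
    constructor
    · refine fun hPt => eqOn_ball_inter_ball_of_eventuallyEq_s13 (hFr s hsI).2 hg ⟨hw.2.1, hw.1⟩ ?_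
      filter_upwards [hW] with z hz
      exact (hst hz.2).trans (hPt ⟨hz.2.2, hz.1⟩)
    · refine fun hPs => eqOn_ball_inter_ball_of_eventuallyEq_s13 (hFr t ht).2 hg ⟨hw.2.2, hw.1⟩ ?_
      filter_upwards [hW] with z hz
      exact (hst hz.2).symm.trans (hPs ⟨hz.2.1, hz.1⟩)
  have h0 : (0 : ℝ) ∈ Icc (0 : ℝ) 1 := ⟨le_rfl, zero_le_one⟩
  have h1 : (1 : ℝ) ∈ Icc (0 : ℝ) 1 := ⟨zero_le_one, le_rfl⟩
  have hP0 : P 0 := eqOn_ball_inter_ball_of_eventuallyEq_s13 (hFr 0 h0).2 hg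
    ⟨by simpa using (hFr 0 h0).1, mem_ball_self hρ⟩ (EventuallyEq.trans hF0 hφg)
  have hP1 : P 1 := isPreconnected_Icc.induction₂' (fun t s => P t → P s) hlocal
    (fun _ _ _ _ _ _ h₁ h₂ => h₂ ∘ h₁) h0 h1 hP0
  exact ⟨F 1, r 1, (hFr 1 h1).1, by simpa using (hFr 1 h1).2, by simpa [P] using hP1⟩

theorem exists_differentiableOn_ball_of_forall_sphere {g : ℂ → ℂ} {ρ : ℝ} (hρ : 0 < ρ)
    (hg : DifferentiableOn ℂ g (ball 0 ρ))
    (H : ∀ ζ ∈ sphere (0 : ℂ) ρ, ∃ h : ℂ → ℂ, ∃ r > 0,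
      DifferentiableOn ℂ h (ball ζ r) ∧ EqOn h g (ball ζ r ∩ ball 0 ρ)) :
    ∃ ρ' > ρ, ∃ G : ℂ → ℂ, DifferentiableOn ℂ G (ball 0 ρ') ∧ EqOn G g (ball 0 ρ) := by
  choose! h r hr hh hhg using H
  have hpair : ∀ ζ ∈ sphere (0 : ℂ) ρ, ∀ ζ' ∈ sphere (0 : ℂ) ρ,
      EqOn (h ζ) (h ζ') (ball ζ (r ζ) ∩ ball ζ' (r ζ')) := by
    intro ζ hζ ζ' hζ' z hz
    obtain ⟨w, hw⟩ := ball_inter_ball_inter_ball_nonempty hρ (mem_sphere_zero_iff_norm.1 hζ).le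
      (mem_sphere_zero_iff_norm.1 hζ').le ⟨z, hz⟩
    refine eqOn_ball_inter_ball_of_eventuallyEq_s13 (hh ζ hζ) (hh ζ' hζ') hw.2 ?_ hz
    filter_upwards [(isOpen_ball.inter (isOpen_ball.inter isOpen_ball)).mem_nhds hw] with x hx
    exact (hhg ζ hζ ⟨hx.2.1, hx.1⟩).trans (hhg ζ' hζ' ⟨hx.2.2, hx.1⟩).symm
  classical
  let G : ℂ → ℂ := fun z =>
    if hz : ∃ ζ ∈ sphere (0 : ℂ) ρ, z ∈ ball ζ (r ζ) then h hz.choose z else g z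
  have hGg : EqOn G g (ball 0 ρ) := by
    intro z hz
    simp only [G]
    split_ifs with hex
    exacts [hhg _ hex.choose_spec.1 ⟨hex.choose_spec.2, hz⟩, rfl]
  have hGh : ∀ ζ ∈ sphere (0 : ℂ) ρ, EqOn G (h ζ) (ball ζ (r ζ)) := by
    intro ζ hζ z hz
    have hex : ∃ ζ ∈ sphere (0 : ℂ) ρ, z ∈ ball ζ (r ζ) := ⟨ζ, hζ, hz⟩
    simp only [G, dif_pos hex]
    exact hpair _ hex.choose_spec.1 ζ hζ ⟨hex.choose_spec.2, hz⟩
  let U : Set ℂ := ball 0 ρ ∪ ⋃ ζ ∈ sphere (0 : ℂ) ρ, ball ζ (r ζ)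
  have hGU : DifferentiableOn ℂ G U := by
    rintro z (hz | hz)
    · exact ((hg.congr hGg).differentiableAt (isOpen_ball.mem_nhds hz)).differentiableWithinAt
    · obtain ⟨ζ, hζ, hzζ⟩ := mem_iUnion₂.1 hz
      exact (((hh ζ hζ).congr (hGh ζ hζ)).differentiableAt
        (isOpen_ball.mem_nhds hzζ)).differentiableWithinAt
  have hsub : closedBall (0 : ℂ) ρ ⊆ U := by
    intro z hz
    rcases (mem_closedBall_zero_iff.1 hz).lt_or_eq with hlt | heq
    · exact Or.inl (mem_ball_zero_iff.2 hlt)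
    · have hzs : z ∈ sphere (0 : ℂ) ρ := mem_sphere_zero_iff_norm.2 heq
      exact Or.inr (mem_iUnion₂.2 ⟨z, hzs, mem_ball_self (hr z hzs)⟩)
  obtain ⟨ε, hε, hεU⟩ := (isCompact_closedBall (0 : ℂ) ρ).exists_thickening_subset_open
    (isOpen_ball.union (isOpen_biUnion fun _ _ => isOpen_ball)) hsub
  rw [thickening_closedBall hε hρ.le] at hεU
  exact ⟨ε + ρ, by linarith, G, hGU.mono hεU, hGg⟩

theorem le_radius_of_differentiableOn {φ g : ℂ → ℂ} {p : FormalMultilinearSeries ℂ ℂ ℂ}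
    (hp : HasFPowerSeriesAt φ p 0) {ρ : ℝ} (hg : DifferentiableOn ℂ g (ball 0 ρ))
    (hφg : φ =ᶠ[𝓝 0] g) : ENNReal.ofReal ρ ≤ p.radius := by
  refine ENNReal.le_of_forall_nnreal_lt fun r hr => ?_
  rcases eq_or_ne r 0 with rfl | hr0
  · simp
  have hrρ : (r : ℝ) < ρ := ENNReal.coe_lt_ofReal.1 hr
  have hq := (hg.mono (closedBall_subset_ball hrρ)).hasFPowerSeriesOnBall (pos_iff_ne_zero.2 hr0)
  rw [(hp.congr hφg).eq_formalMultilinearSeries hq.hasFPowerSeriesAt]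
  exact hq.r_le

theorem exists_differentiable_of_forall_continuesAlong_ray {φ : ℂ → ℂ} (hφ : HolGermAtZero φ)
    (hray : ∀ ζ : ℂ, ContinuesAlong φ (fun t : ℝ => t • ζ) 1) :
    ∃ g : ℂ → ℂ, Differentiable ℂ g ∧ φ =ᶠ[𝓝 0] g := by
  obtain ⟨r, hr, hφr⟩ := hφ
  obtain ⟨p, hp⟩ : AnalyticAt ℂ φ 0 := hφr.analyticAt (ball_mem_nhds 0 hr)
  have hφp : φ =ᶠ[𝓝 0] p.sum := by
    obtain ⟨R, hR⟩ := hp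
    filter_upwards [eball_mem_nhds 0 hR.r_pos] with z hz
    simpa using hR.sum hz
  have hsum : DifferentiableOn ℂ p.sum (eball 0 p.radius) :=
    (p.hasFPowerSeriesOnBall hp.radius_pos).differentiableOn
  rcases eq_or_ne p.radius ⊤ with htop | hfin
  · rw [htop, eball_top] at hsum
    exact ⟨p.sum, differentiableOn_univ.1 hsum, hφp⟩
  -- a finite radius of convergence could be pushed past by continuing along the rays
  rw [← ENNReal.ofReal_toReal hfin, eball_ofReal] at hsum
  set ρ := p.radius.toReal
  have hρ : 0 < ρ := ENNReal.toReal_pos hp.radius_pos.ne' hfin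
  obtain ⟨ρ', hρ', G, hG, hGp⟩ := exists_differentiableOn_ball_of_forall_sphere hρ hsum
    fun ζ hζ => by
      rw [← mem_sphere_zero_iff_norm.1 hζ] at hsum ⊢
      exact exists_extension_of_continuesAlong_ray (ne_zero_of_mem_sphere hρ.ne' ⟨ζ, hζ⟩)
        (hray ζ) hsum hφp
  have hρ'ρ := le_radius_of_differentiableOn hp hG
    (hφp.trans (hGp.eventuallyEq_of_mem (ball_mem_nhds 0 hρ)).symm)
  rw [← ENNReal.ofReal_toReal hfin, ENNReal.ofReal_le_ofReal_iff hρ.le] at hρ'ρ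
  linarith

theorem continuesAlong_of_differentiableOn {φ g : ℂ → ℂ} {U : Set ℂ} {γ : ℝ → ℂ} {t₁ : ℝ}
    (hU : IsOpen U) (hg : DifferentiableOn ℂ g U) (hγ : ∀ t ∈ Icc 0 t₁, γ t ∈ U)
    (hgφ : g =ᶠ[𝓝 0] φ) : ContinuesAlong φ γ t₁ := by
  choose! r hr hrU using fun t ht => Metric.isOpen_iff.1 hU (γ t) (hγ t ht)
  exact ⟨g, fun _ => g, r, fun t ht => ⟨hr t ht, hg.mono (hrU t ht)⟩,
    fun _ _ => Eventually.of_forall fun _ _ _ => rfl, hgφ, EventuallyEq.rfl⟩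

theorem omContinuable_of_differentiable (f : ℝ → Set ℂ) {φ g : ℂ → ℂ}
    (hg : Differentiable ℂ g) (hφg : φ =ᶠ[𝓝 0] g) : OmContinuable f φ := by
  obtain ⟨r, hr, hball⟩ := Metric.eventually_nhds_iff_ball.1 hφg
  exact ⟨⟨r, hr, hg.differentiableOn.congr hball⟩, fun _ _ _ =>
    continuesAlong_of_differentiableOn isOpen_univ hg.differentiableOn (fun _ _ => mem_univ _)
      hφg.symm⟩

theorem not_exists_differentiable_sub_inv {ω : ℂ} (hω : ω ≠ 0) :
    ¬ ∃ g : ℂ → ℂ, Differentiable ℂ g ∧ (fun z => (z - ω)⁻¹) =ᶠ[𝓝 0] g := by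
  rintro ⟨g, hg, hφg⟩
  have hmul : (fun z => g z * (z - ω)) = fun _ => 1 := by
    refine AnalyticOnNhd.eq_of_eventuallyEq (z₀ := 0)
      (fun z _ => (hg.mul (differentiable_id.sub_const ω)).analyticAt z)
      (fun z _ => analyticAt_const) ?_
    filter_upwards [hφg, eventually_ne_nhds hω.symm] with z hz hzω
    simp [← hz, sub_ne_zero.2 hzω]
  simpa using congrFun hmul ω

theorem OmAllowed.apply_ne {Ω : DFS} {γ : ℝ → ℂ} {t₁ : ℝ} (hγ : OmAllowed Ω.sets γ t₁)
    {ω : ℂ} (hω : ω ∈ ucFun Ω.sets ‖ω‖) {t : ℝ} (ht : t ∈ Icc 0 t₁) : γ t ≠ ω := by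
  obtain ⟨-, hγ0, ⟨K, hK⟩, hM⟩ := hγ
  rintro rfl
  have hlen : ‖γ t‖ ≤ pathLen γ t := by
    simpa [hγ0] using norm_sub_le_pathLen (hK.mono (Icc_subset_Icc_right ht.2)) ht.1
  apply hM t ht
  rw [Ω.closure_singSet]
  exact ⟨ENNReal.toReal_nonneg, Ω.ucFun_mono hlen hω⟩

theorem omContinuable_sub_inv {Ω : DFS} {ω : ℂ} (hω : ω ∈ ucFun Ω.sets ‖ω‖) :
    OmContinuable Ω.sets fun z => (z - ω)⁻¹ := by
  have hdiff : DifferentiableOn ℂ (fun z => (z - ω)⁻¹) {ω}ᶜ := fun z hz =>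
    ((differentiableAt_id.sub_const ω).inv (sub_ne_zero.2 hz)).differentiableWithinAt
  refine ⟨⟨‖ω‖, Ω.pos_of_mem_ucFun hω, hdiff.mono fun z hz => ?_⟩, fun γ t₁ hγ =>
    continuesAlong_of_differentiableOn isOpen_compl_singleton hdiff
      (fun t ht => hγ.apply_ne hω ht) EventuallyEq.rfl⟩
  rintro rfl
  simp at hz

theorem omAllowed_ray {Ω : DFS} (hΩ : ∀ L > 0, ucFun Ω.sets L ⊆ {ω | ‖ω‖ < L}) (ζ : ℂ) :
    OmAllowed Ω.sets (fun t : ℝ => t • ζ) 1 := by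
  have hK := (lipschitzWith_smul_right ζ).lipschitzOnWith (s := Icc 0 1)
  refine ⟨zero_le_one, zero_smul ℝ ζ, ⟨_, hK⟩, fun t ht hmem => ?_⟩
  rw [Ω.closure_singSet] at hmem
  have hlt : ‖t • ζ‖ < pathLen (fun t : ℝ => t • ζ) t := hΩ _ (Ω.pos_of_mem_ucFun hmem.2) hmem.2
  have hle := pathLen_le_of_lipschitzOnWith (hK.mono (Icc_subset_Icc_right ht.2)) ht.1
  rw [norm_smul, Real.norm_of_nonneg ht.1] at hlt
  rw [coe_nnnorm] at hle
  linarith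

/-- The space of `Ω`-continuable germs equals the space of (germs of) entire
functions iff for every `L > 0` there is `L' > L` with `Ω_{L'} ⊆ {|ω| < L}`. -/
theorem continuable_eq_entire_iff (Ω : DFS) :
    (∀ φ : ℂ → ℂ, OmContinuable Ω.sets φ ↔
      ∃ g : ℂ → ℂ, Differentiable ℂ g ∧ ∀ᶠ z in nhds 0, φ z = g z) ↔
    (∀ L > (0:ℝ), ∃ L' > L, Ω.sets L' ⊆ {ω : ℂ | ‖ω‖ < L}) := by
  simp only [Ω.exists_sets_subset_iff]
  constructor
  · intro h L _ ω hω
    by_contra! hLω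
    have hω' : ω ∈ ucFun Ω.sets ‖ω‖ := Ω.ucFun_mono (not_lt.1 hLω) hω
    exact not_exists_differentiable_sub_inv (norm_pos_iff.1 (Ω.pos_of_mem_ucFun hω'))
      ((h _).1 (omContinuable_sub_inv hω'))
  · refine fun hΩ φ => ⟨fun hφ => ?_, fun ⟨g, hg, hφg⟩ => omContinuable_of_differentiable _ hg hφg⟩
    exact exists_differentiable_of_forall_continuesAlong_ray hφ.1
      fun ζ => hφ.2 _ _ (omAllowed_ray hΩ ζ)
end

section
/- There exist closed discrete subsets Σ, Σ′ of ℂ such that the sumset { ω′ + ω″ : ω′ ∈ Σ, ω″ ∈ Σ′ } is not closed and discrete in ℂ; e.g. Σ = Σ′ = (ℤ_{>0}·√2) ∪ ℤ_{<0} has this property. Consequently Ω(Σ) * Ω(Σ′) ≠ Ω(Σ″) for every closed discrete Σ″. -/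
open MeasureTheory Metric Set

/-!
The numbers `(√2 - 1) ^ (2n + 1)` are nonzero, tend to `0`, and are of the form `a√2 - b` with
positive integers `a, b` (Pell recursion), so they lie in `Σ + Σ` with `Σ = ℤ_{>0}√2 ∪ ℤ_{<0}`.
Hence `0` is an accumulation point of `Σ + Σ`, and of any `Σ''` with `Ω(Σ) * Ω(Σ) = Ω(Σ'')`,
since such a `Σ''` contains `Σ + Σ`. A closed set without accumulation points in itself has none
at all, whereas `Σ` itself has none because its points escape to infinity.
-/

open Filter Topology Real

section AccPt

variable {X : Type*} [TopologicalSpace X] {A : Set X}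

theorem isClosed_and_forall_mem_not_accPt_iff :
    (IsClosed A ∧ ∀ x ∈ A, ¬AccPt x (𝓟 A)) ↔ ∀ x, ¬AccPt x (𝓟 A) :=
  ⟨fun ⟨hA, hdisc⟩ x hx => hdisc x (isClosed_iff_accPt.1 hA x hx) hx,
    fun h => ⟨isClosed_iff_accPt.2 fun x hx => (h x hx).elim, fun x _ => h x⟩⟩

theorem accPt_of_tendsto {ι : Type*} {l : Filter ι} [l.NeBot] {u : ι → X} {x : X}
    (hu : Tendsto u l (𝓝 x)) (hne : ∀ i, u i ≠ x) (hmem : ∀ i, u i ∈ A) : AccPt x (𝓟 A) :=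
  accPt_iff_frequently.2 <| hu.frequently <| Frequently.of_forall fun i => ⟨hne i, hmem i⟩

theorem not_accPt_of_finite_inter_mem_nhds [T1Space X] {U : Set X} {x : X} (hU : U ∈ 𝓝 x)
    (hfin : (A ∩ U).Finite) : ¬AccPt x (𝓟 A) := by
  intro hx
  refine (Set.Infinite.of_accPt (x := x) (S := A ∩ U) ?_) hfin
  rw [accPt_iff_nhds] at hx ⊢
  intro V hV
  obtain ⟨y, ⟨⟨hyV, hyU⟩, hyA⟩, hyx⟩ := hx (V ∩ U) (inter_mem hV hU)
  exact ⟨y, ⟨hyV, hyA, hyU⟩, hyx⟩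

theorem not_accPt_range_of_tendsto_cofinite_cocompact [T1Space X] [WeaklyLocallyCompactSpace X]
    {ι : Type*} {f : ι → X} (hf : Tendsto f cofinite (cocompact X)) (x : X) :
    ¬AccPt x (𝓟 (range f)) := by
  obtain ⟨K, hK, hKx⟩ := exists_compact_mem_nhds x
  refine not_accPt_of_finite_inter_mem_nhds hKx ?_
  rw [← image_preimage_eq_range_inter]
  exact (tendsto_cofinite_cocompact_iff.1 hf K hK).image f

end AccPt

theorem add_mem_sumFun_omOf {A B : Set ℂ} {a b : ℂ} (ha : a ∈ A) (hb : b ∈ B) :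
    a + b ∈ sumFun (omOf A) (omOf B) (‖a‖ + ‖b‖) :=
  Or.inl <| Or.inl
    ⟨‖a‖, ‖b‖, norm_nonneg a, norm_nonneg b, rfl, a, ⟨ha, le_rfl⟩, b, ⟨hb, le_rfl⟩, rfl⟩

theorem image2_add_subset_of_sumFun_omOf_eq {A B T : Set ℂ}
    (h : sumFun (omOf A) (omOf B) = omOf T) : image2 (· + ·) A B ⊆ T := by
  rintro _ ⟨a, ha, b, hb, rfl⟩
  have hab := add_mem_sumFun_omOf ha hb
  rw [h] at hab
  exact hab.1

/- Multiplication by `(√2 - 1) ^ 2 = 3 - 2√2` sends `a√2 - b` to `(3a + 2b)√2 - (4a + 3b)`. -/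
theorem exists_sqrt_two_sub_one_pow_odd_eq (n : ℕ) :
    ∃ a b : ℕ, (√2 - 1) ^ (2 * n + 1) = (a + 1) * √2 - (b + 1) := by
  induction n with
  | zero => exact ⟨0, 0, by simp⟩
  | succ n ih =>
    obtain ⟨a, b, hab⟩ := ih
    refine ⟨3 * a + 2 * b + 4, 4 * a + 3 * b + 6, ?_⟩
    have hsq : √2 ^ 2 = 2 := Real.sq_sqrt zero_le_two
    rw [show 2 * (n + 1) + 1 = 2 * n + 1 + 2 by ring, pow_add, hab]
    push_cast
    linear_combination ((a + 1) * √2 - (2 * a + b + 3)) * hsq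

def sigmaSqrtTwo : Set ℂ :=
  range (fun n : ℕ => ((n : ℂ) + 1) * (√2 : ℂ)) ∪ range (fun n : ℕ => -((n : ℂ) + 1))

theorem forall_not_accPt_sigmaSqrtTwo (x : ℂ) : ¬AccPt x (𝓟 sigmaSqrtTwo) := by
  have hcocompact {f : ℕ → ℂ} (hf : ∀ n : ℕ, (n : ℝ) ≤ ‖f n‖) :
      Tendsto f cofinite (cocompact ℂ) := by
    rw [Nat.cofinite_eq_atTop, ← Metric.cobounded_eq_cocompact, ← tendsto_norm_atTop_iff_cobounded]
    exact tendsto_atTop_mono hf tendsto_natCast_atTop_atTop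
  rw [sigmaSqrtTwo, ← sup_principal, accPt_sup, not_or]
  constructor
  · refine not_accPt_range_of_tendsto_cofinite_cocompact (hcocompact fun n => ?_) x
    rw [norm_mul, Complex.norm_real, Real.norm_of_nonneg (Real.sqrt_nonneg 2)]
    norm_cast
    exact (Nat.cast_le.2 n.le_succ).trans
      (le_mul_of_one_le_right (by positivity) one_lt_sqrt_two.le)
  · refine not_accPt_range_of_tendsto_cofinite_cocompact (hcocompact fun n => ?_) x
    rw [norm_neg]
    norm_cast
    simp

theorem accPt_zero_image2_add_sigmaSqrtTwo :
    AccPt (0 : ℂ) (𝓟 (image2 (· + ·) sigmaSqrtTwo sigmaSqrtTwo)) := by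
  have hpos : 0 < √2 - 1 := sub_pos.2 one_lt_sqrt_two
  have hlt : √2 - 1 < 1 := by
    rw [sub_lt_iff_lt_add, one_add_one_eq_two, Real.sqrt_lt' two_pos]
    norm_num
  refine accPt_of_tendsto (u := fun n : ℕ => (((√2 - 1) ^ (2 * n + 1) : ℝ) : ℂ)) (l := atTop)
    ?_ (fun n => ?_) (fun n => ?_)
  · have hodd : Tendsto (fun n : ℕ => 2 * n + 1) atTop atTop :=
      tendsto_atTop_mono (fun n => show n ≤ 2 * n + 1 by omega) tendsto_id
    have h := (Complex.continuous_ofReal.tendsto 0).comp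
      ((tendsto_pow_atTop_nhds_zero_of_lt_one hpos.le hlt).comp hodd)
    rwa [Complex.ofReal_zero] at h
  · exact_mod_cast (pow_pos hpos _).ne'
  · obtain ⟨a, b, hab⟩ := exists_sqrt_two_sub_one_pow_odd_eq n
    refine ⟨_, Or.inl ⟨a, rfl⟩, _, Or.inr ⟨b, rfl⟩, ?_⟩
    simp only [hab]
    push_cast
    ring

/-- A counterexample: `Σ = Σ' = ℤ_{>0}√2 ∪ ℤ_{<0}` is closed and discrete but
its sumset is not, and `Ω(Σ) * Ω(Σ')` is not of the form `Ω(Σ'')` for any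
closed discrete `Σ''`. -/
theorem sum_dfs_counterexample :
    ∃ S : Set ℂ,
      S = Set.range (fun n : ℕ => ((n : ℂ) + 1) * (Real.sqrt 2 : ℂ)) ∪
          Set.range (fun n : ℕ => -((n : ℂ) + 1)) ∧
      IsClosed S ∧ (∀ x ∈ S, ¬ AccPt x (Filter.principal S)) ∧
      ¬ (IsClosed (Set.image2 (· + ·) S S) ∧
          ∀ x ∈ Set.image2 (· + ·) S S,
            ¬ AccPt x (Filter.principal (Set.image2 (· + ·) S S))) ∧
      ∀ T : Set ℂ, IsClosed T → (∀ x ∈ T, ¬ AccPt x (Filter.principal T)) →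
        sumFun (omOf S) (omOf S) ≠ omOf T := by
  obtain ⟨hclosed, hdiscrete⟩ :=
    isClosed_and_forall_mem_not_accPt_iff.2 forall_not_accPt_sigmaSqrtTwo
  refine ⟨sigmaSqrtTwo, rfl, hclosed, hdiscrete, fun hsum => ?_, fun T hT hTdisc hsumT => ?_⟩
  · exact isClosed_and_forall_mem_not_accPt_iff.1 hsum 0 accPt_zero_image2_add_sigmaSqrtTwo
  · exact isClosed_and_forall_mem_not_accPt_iff.1 ⟨hT, hTdisc⟩ 0 <|
      accPt_zero_image2_add_sigmaSqrtTwo.mono <|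
        principal_mono.2 (image2_add_subset_of_sumFun_omOf_eq hsumT)
end

section
/- (Key Gronwall estimate for the convolution flow.) Let δ ∈ (0,ρ), let Ω be a d.f.s. equal to its upper closure with Ω_{3ρ} = ∅, let n ≥ 1, and let γ ∈ Π^{δ,L}_{Ω^{*n}}. Define η(v) := dist(v, {(0,0)} ∪ S_Ω) and D(t, v⃗) := η(v₁)+⋯+η(v_n) + |γ̃(t) − (v₁+⋯+v_n)| for v⃗ ∈ (ℝ×ℂ)ⁿ, where γ̃(t) = (L(γ|_{[0,t]}), γ(t)). Then D(t, v⃗) ≥ δ for all t ∈ [a,1] and all v⃗ ∈ (ℝ×ℂ)ⁿ. -/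
open MeasureTheory Metric Set

/-! By the triangle inequality, `D(w, v⃗)` is at least the distance from `w` to the set of sums
of `n` points of `{0} ∪ S_Ω`, and that set lies in `{0} ∪ S_{Ω^{*n}}`. The point
`w = γ̃(t)` keeps distance `δ` from `S_{Ω^{*n}}` by assumption, and from the origin because
for `t ≥ a` its first coordinate, the length of `γ|_{[0,t]}`, is at least `‖γ(a)‖ = ρ > δ`. -/

open scoped Pointwise

lemma eucNorm_eq_norm_toLp (p : ℝ × ℂ) : eucNorm p = ‖WithLp.toLp 2 p‖ := by
  simp [eucNorm, WithLp.prod_norm_eq_of_L2, Real.norm_eq_abs, sq_abs]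

lemma eucNorm_nonneg (p : ℝ × ℂ) : 0 ≤ eucNorm p := Real.sqrt_nonneg _

lemma eucNorm_add_le (p q : ℝ × ℂ) : eucNorm (p + q) ≤ eucNorm p + eucNorm q := by
  simpa only [eucNorm_eq_norm_toLp, WithLp.toLp_add] using norm_add_le _ _

lemma fst_le_eucNorm (p : ℝ × ℂ) : p.1 ≤ eucNorm p :=
  (le_abs_self _).trans <| Real.abs_le_sqrt (le_add_of_nonneg_right (by positivity))

lemma eucDist_add_add_le (x y a b : ℝ × ℂ) :
    eucDist (x + y) (a + b) ≤ eucDist x a + eucDist y b := by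
  unfold eucDist
  rw [add_sub_add_comm]
  exact eucNorm_add_le _ _

section eucSetDist

variable {x : ℝ × ℂ} {S T : Set (ℝ × ℂ)}

lemma eucDist_image_bddBelow (x : ℝ × ℂ) (S : Set (ℝ × ℂ)) : BddBelow (eucDist x '' S) :=
  ⟨0, by rintro _ ⟨q, -, rfl⟩; exact eucNorm_nonneg _⟩

lemma eucSetDist_le_eucDist {q : ℝ × ℂ} (hq : q ∈ S) : eucSetDist x S ≤ eucDist x q :=
  csInf_le (eucDist_image_bddBelow x S) (mem_image_of_mem _ hq)

lemma le_eucSetDist {δ : ℝ} (hS : S.Nonempty) (h : ∀ q ∈ S, δ ≤ eucDist x q) :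
    δ ≤ eucSetDist x S :=
  le_csInf (hS.image _) (by rintro _ ⟨q, hq, rfl⟩; exact h q hq)

lemma eucSetDist_singleton (x q : ℝ × ℂ) : eucSetDist x {q} = eucDist x q := by
  rw [eucSetDist, image_singleton, csInf_singleton]

lemma eucSetDist_anti (hS : S.Nonempty) (hST : S ⊆ T) : eucSetDist x T ≤ eucSetDist x S :=
  le_eucSetDist hS fun _ hq => eucSetDist_le_eucDist (hST hq)

lemma eucSetDist_add_le (y : ℝ × ℂ) (hS : S.Nonempty) (hT : T.Nonempty) :
    eucSetDist (x + y) (S + T) ≤ eucSetDist x S + eucSetDist y T := by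
  have key : ∀ a ∈ S, ∀ b ∈ T, eucSetDist (x + y) (S + T) ≤ eucDist x a + eucDist y b :=
    fun a ha b hb =>
      (eucSetDist_le_eucDist (add_mem_add ha hb)).trans (eucDist_add_add_le x y a b)
  have hx : eucSetDist (x + y) (S + T) - eucSetDist y T ≤ eucSetDist x S :=
    le_eucSetDist hS fun a ha => sub_le_comm.1 <|
      le_eucSetDist hT fun b hb => sub_le_iff_le_add'.2 (key a ha b hb)
  linarith

end eucSetDist

lemma insert_zero_add_insert_zero_subset {M : Type*} [AddZeroClass M] {A B C : Set M}
    (hA : A ⊆ C) (hB : B ⊆ C) (hAB : A + B ⊆ C) : insert 0 A + insert 0 B ⊆ insert 0 C := by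
  rintro _ ⟨a, ha, b, hb, rfl⟩
  rcases ha with rfl | ha <;> rcases hb with rfl | hb
  · simp
  · simpa using Or.inr (hB hb)
  · simpa using Or.inr (hA ha)
  · exact Or.inr (hAB (add_mem_add ha hb))

section SingSet

variable (f g : ℝ → Set ℂ)

lemma singSet_subset_sumFun_left : SingSet f ⊆ SingSet (sumFun f g) :=
  fun _ hp => ⟨hp.1, Or.inl (Or.inr hp.2)⟩

lemma singSet_subset_sumFun_right : SingSet g ⊆ SingSet (sumFun f g) :=
  fun _ hp => ⟨hp.1, Or.inr hp.2⟩

lemma singSet_add_singSet_subset_sumFun : SingSet f + SingSet g ⊆ SingSet (sumFun f g) := by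
  rintro _ ⟨p, hp, q, hq, rfl⟩
  exact ⟨add_nonneg hp.1 hq.1, Or.inl (Or.inl ⟨p.1, q.1, hp.1, hq.1, rfl, p.2, hp.2, q.2, hq.2, rfl⟩)⟩

lemma singSet_subset_iterSum (n : ℕ) : SingSet f ⊆ SingSet (iterSum f n) := by
  induction n with
  | zero => exact subset_rfl
  | succ n _ => exact singSet_subset_sumFun_right _ _

def singSumSet : ℕ → Set (ℝ × ℂ)
  | 0 => {0}
  | n + 1 => singSumSet n + insert 0 (SingSet f)

lemma zero_mem_singSumSet (n : ℕ) : (0 : ℝ × ℂ) ∈ singSumSet f n := by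
  induction n with
  | zero => rfl
  | succ n ih => exact ⟨0, ih, 0, mem_insert _ _, add_zero 0⟩

lemma singSumSet_succ_subset (n : ℕ) :
    singSumSet f (n + 1) ⊆ insert 0 (SingSet (iterSum f n)) := by
  induction n with
  | zero => simp [singSumSet, iterSum]
  | succ n ih =>
    refine (add_subset_add_right ih).trans (insert_zero_add_insert_zero_subset ?_ ?_ ?_)
    · exact singSet_subset_sumFun_left _ _
    · exact singSet_subset_iterSum f (n + 1)
    · exact singSet_add_singSet_subset_sumFun _ _

lemma singSumSet_subset (n : ℕ) : singSumSet f n ⊆ insert 0 (SingSet (iterSum f (n - 1))) := by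
  cases n with
  | zero => simp [singSumSet]
  | succ n => exact singSumSet_succ_subset f n

end SingSet

lemma DFun_zero (f : ℝ → Set ℂ) (w : ℝ × ℂ) (v : Fin 0 → ℝ × ℂ) :
    DFun f 0 w v = eucDist w 0 := by
  simp [DFun, eucDist]

lemma DFun_succ (f : ℝ → Set ℂ) (n : ℕ) (w : ℝ × ℂ) (v : Fin (n + 1) → ℝ × ℂ) :
    DFun f (n + 1) w v =
      DFun f n (w - v (Fin.last n)) (fun i => v i.castSucc) + etaFun f (v (Fin.last n)) := by
  simp only [DFun, Fin.sum_univ_castSucc, sub_add_eq_sub_sub_swap]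
  ring

lemma eucSetDist_singSumSet_le_DFun (f : ℝ → Set ℂ) (n : ℕ) (w : ℝ × ℂ) (v : Fin n → ℝ × ℂ) :
    eucSetDist w (singSumSet f n) ≤ DFun f n w v := by
  induction n generalizing w with
  | zero => rw [DFun_zero, singSumSet, eucSetDist_singleton]
  | succ n ih =>
    rw [DFun_succ, etaFun, singleton_union, Prod.mk_zero_zero]
    calc eucSetDist w (singSumSet f (n + 1))
        = eucSetDist ((w - v (Fin.last n)) + v (Fin.last n))
            (singSumSet f n + insert 0 (SingSet f)) := by rw [sub_add_cancel, singSumSet]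
      _ ≤ eucSetDist (w - v (Fin.last n)) (singSumSet f n)
            + eucSetDist (v (Fin.last n)) (insert 0 (SingSet f)) :=
          eucSetDist_add_le _ ⟨0, zero_mem_singSumSet f n⟩ (insert_nonempty _ _)
      _ ≤ _ := by gcongr; exact ih _ _

lemma norm_le_pathLen {γ : ℝ → ℂ} {K : NNReal} {T t s : ℝ} (hγ0 : γ 0 = 0)
    (hK : LipschitzOnWith K γ (Icc 0 T)) (htT : t ≤ T) (hs : s ∈ Icc 0 t) :
    ‖γ s‖ ≤ pathLen γ t := by
  have hbv : BoundedVariationOn γ (Icc 0 t) := by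
    simpa using (hK.mono (Icc_subset_Icc_right htT)).locallyBoundedVariationOn 0 t
      ⟨le_rfl, hs.1.trans hs.2⟩ ⟨hs.1.trans hs.2, le_rfl⟩
  simpa [hγ0, pathLen] using hbv.dist_le hs ⟨le_rfl, hs.1.trans hs.2⟩

theorem DFun_lower_bound_general (ρ δ Lb : ℝ) (hδρ : δ < ρ)
    (Ω : DFS)
    (n : ℕ)
    (γ : ℝ → ℂ) (hγ0 : γ 0 = 0)
    (hlip : ∃ K, LipschitzOnWith K γ (Set.Icc 0 1))
    (a : ℝ) (ha : 0 < a)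
    (hρa : ‖γ a‖ = ρ)
    (hPi : ∀ t ∈ Set.Icc (0:ℝ) 1,
      (∀ q ∈ SingSet (iterSum Ω.sets (n - 1)),
        δ ≤ eucDist (pathLen γ t, γ t) q) ∧ pathLen γ t ≤ Lb) :
    ∀ t ∈ Set.Icc a 1, ∀ v : Fin n → ℝ × ℂ,
      δ ≤ DFun Ω.sets n (pathLen γ t, γ t) v := by
  intro t ⟨hat, ht1⟩ v
  obtain ⟨K, hK⟩ := hlip
  have hρ : ρ ≤ pathLen γ t := hρa ▸ norm_le_pathLen hγ0 hK ht1 ⟨ha.le, hat⟩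
  have hfar : ∀ q ∈ insert 0 (SingSet (iterSum Ω.sets (n - 1))),
      δ ≤ eucDist (pathLen γ t, γ t) q := by
    rintro q (rfl | hq)
    · have := fst_le_eucNorm (pathLen γ t, γ t)
      rw [eucDist, sub_zero]
      linarith
    · exact (hPi t ⟨ha.le.trans hat, ht1⟩).1 q hq
  calc δ ≤ eucSetDist (pathLen γ t, γ t) (insert 0 (SingSet (iterSum Ω.sets (n - 1)))) :=
        le_eucSetDist (insert_nonempty _ _) hfar
    _ ≤ eucSetDist (pathLen γ t, γ t) (singSumSet Ω.sets n) :=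
        eucSetDist_anti ⟨0, zero_mem_singSumSet _ n⟩ (singSumSet_subset _ n)
    _ ≤ DFun Ω.sets n (pathLen γ t, γ t) v := eucSetDist_singSumSet_le_DFun _ n _ v

/-- Lower bound `D ≥ δ` for the function `D` used in the construction of the
deformation vector field. -/
theorem DFun_lower_bound (ρ δ Lb : ℝ) (hδ : 0 < δ) (hδρ : δ < ρ)
    (Ω : DFS) (huc : ucFun Ω.sets = Ω.sets) (hρ : Ω.sets (3 * ρ) = ∅)
    (n : ℕ) (hn : 1 ≤ n)
    (γ : ℝ → ℂ) (hγ0 : γ 0 = 0)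
    (hlip : ∃ K, LipschitzOnWith K γ (Set.Icc 0 1))
    (a : ℝ) (ha : 0 < a) (ha1 : a < 1)
    (hseg : ∀ t ∈ Set.Icc 0 a, γ t = (t / a) • γ a)
    (hρa : ‖γ a‖ = ρ)
    (hPi : ∀ t ∈ Set.Icc (0:ℝ) 1,
      (∀ q ∈ SingSet (iterSum Ω.sets (n - 1)),
        δ ≤ eucDist (pathLen γ t, γ t) q) ∧ pathLen γ t ≤ Lb) :
    ∀ t ∈ Set.Icc a 1, ∀ v : Fin n → ℝ × ℂ,
      δ ≤ DFun Ω.sets n (pathLen γ t, γ t) v :=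
  DFun_lower_bound_general ρ δ Lb hδρ Ω n γ hγ0 hlip a ha hρa hPi
end

section
/- (Convolution integral representation on the simplex.) For convergent power series f₁, …, f_n ∈ ℂ{ζ} holomorphic on a disc U of radius r centered at 0, and for ζ ∈ U, the iterated convolution satisfies (1 * f₁ * ⋯ * f_n)(ζ) = ζⁿ ∫_{Δ_n} f₁(ζ s₁) ⋯ f_n(ζ s_n) ds₁ ⋯ ds_n, where Δ_n = { s ∈ ℝ≥0ⁿ : s₁+⋯+s_n ≤ 1 } and 1 denotes the constant function 1. Consequently |(1 * f₁ * ⋯ * f_n)(ζ)| ≤ (|ζ|ⁿ/n!) ∏ⱼ sup_{|ξ|≤|ζ|} |fⱼ(ξ)|. -/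
open MeasureTheory Metric Set

/-!
Cutting `Δ_{n+1}` along its last coordinate `1 - s` leaves slices that are copies of `Δ_n`
scaled by `s`, so `∫_{Δ_{n+1}} h = ∫₀¹ sⁿ ∫_{Δ_n} h(s u, 1 - s) du ds`. For
`h(x) = ∏ fᵢ(xᵢ ζ)` the right-hand side is one more convolution step
`ζ ∫₀¹ (1 * f₁ * ⋯ * f_n)(sζ) f_{n+1}(ζ - sζ) ds` of the representation for `n`, and for `h = 1`
it gives `vol Δ_{n+1} = vol Δ_n / (n + 1)`, whence `vol Δ_n = 1/n!` and the bound.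
-/

open scoped Pointwise


section Simplex

variable {n : ℕ}

lemma simplex_subset_Icc : simplex n ⊆ Icc 0 1 :=
  fun _ hs => ⟨hs.1, fun i =>
    (Finset.single_le_sum (fun j _ => hs.1 j) (Finset.mem_univ i)).trans hs.2⟩

lemma isClosed_simplex : IsClosed (simplex n) :=
  (isClosed_Ici (a := (0 : Fin n → ℝ))).inter
    (isClosed_le (continuous_finsetSum _ fun i _ => continuous_apply i) continuous_const)

lemma isCompact_simplex : IsCompact (simplex n) :=
  isCompact_Icc.of_isClosed_subset isClosed_simplex simplex_subset_Icc

lemma snoc_mem_simplex_iff {u : Fin n → ℝ} {y : ℝ} (hy : y < 1) :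
    Fin.snoc u y ∈ simplex (n + 1) ↔ 0 ≤ y ∧ u ∈ (1 - y) • simplex n := by
  have hc : 0 < 1 - y := sub_pos.2 hy
  rw [mem_smul_set_iff_inv_smul_mem₀ hc.ne']
  simp only [simplex, mem_ofPred_eq, Fin.sum_univ_castSucc, Fin.snoc_castSucc, Fin.snoc_last,
    Fin.forall_fin_succ', Pi.smul_apply, smul_eq_mul, ← Finset.mul_sum, inv_mul_le_iff₀ hc,
    mul_nonneg_iff_of_pos_left (inv_pos.2 hc)]
  constructor
  · rintro ⟨⟨hu, hy⟩, hsum⟩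
    exact ⟨hy, hu, by linarith⟩
  · rintro ⟨hy, hu, hsum⟩
    exact ⟨⟨hu, hy⟩, by linarith⟩

end Simplex

section Slicing

variable {E : Type*} [NormedAddCommGroup E] [NormedSpace ℝ E] {n : ℕ}

lemma integral_indicator_simplex_snoc (h : (Fin (n + 1) → ℝ) → E) {y : ℝ} (hy : y ≠ 1) :
    ∫ u, (simplex (n + 1)).indicator h (Fin.snoc u y) =
      (Ico 0 1).indicator
        (fun y => (1 - y) ^ n • ∫ u in simplex n, h (Fin.snoc ((1 - y) • u) y)) y := by
  rcases lt_or_gt_of_ne hy with hy1 | hy1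
  · simp_rw [← indicator_comp_right (fun u : Fin n → ℝ => (Fin.snoc u y : Fin (n + 1) → ℝ))]
    by_cases hy0 : 0 ≤ y
    · have hpre : (fun u : Fin n → ℝ => (Fin.snoc u y : Fin (n + 1) → ℝ)) ⁻¹' simplex (n + 1)
          = (1 - y) • simplex n := by
        ext u; simp [snoc_mem_simplex_iff hy1, hy0]
      rw [hpre, integral_indicator (isClosed_simplex.measurableSet.const_smul₀ _),
        indicator_of_mem (show y ∈ Ico (0 : ℝ) 1 from ⟨hy0, hy1⟩),
        Measure.setIntegral_comp_smul_of_pos _ (fun u => h (Fin.snoc u y)) _ (sub_pos.2 hy1),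
        Module.finrank_fin_fun, smul_inv_smul₀ (pow_ne_zero _ (sub_pos.2 hy1).ne')]
      rfl
    · have hpre : (fun u : Fin n → ℝ => (Fin.snoc u y : Fin (n + 1) → ℝ)) ⁻¹' simplex (n + 1)
          = ∅ := by
        ext u; simp [snoc_mem_simplex_iff hy1, hy0]
      rw [hpre, indicator_empty, integral_zero, indicator_of_notMem (fun h => hy0 h.1)]
  · have hout : ∀ u : Fin n → ℝ, (Fin.snoc u y : Fin (n + 1) → ℝ) ∉ simplex (n + 1) :=
      fun u hu => (simplex_subset_Icc hu).2 (Fin.last n) |>.not_gt (by simpa using hy1)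
    rw [indicator_of_notMem fun hy' : y ∈ Ico (0 : ℝ) 1 => lt_asymm hy1 hy'.2]
    simp [indicator_of_notMem (hout _)]

theorem integral_eq_integral_integral_snoc [CompleteSpace E] {g : (Fin (n + 1) → ℝ) → E}
    (hg : Integrable g) : ∫ x, g x = ∫ y, ∫ u, g (Fin.snoc u y) := by
  set e := (MeasurableEquiv.piFinSuccAbove (fun _ : Fin (n + 1) => ℝ) (Fin.last n)).symm
  have he : ∀ p, e p = Fin.snoc p.2 p.1 := fun p => by
    simp [e, Fin.insertNthEquiv, Fin.insertNth_last']
  have hmp : MeasurePreserving e :=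
    (volume_preserving_piFinSuccAbove (fun _ : Fin (n + 1) => ℝ) (Fin.last n)).symm
  rw [← hmp.integral_comp' g, Measure.volume_eq_prod,
    integral_prod (fun p => g (e p)) (hmp.integrable_comp_emb e.measurableEmbedding |>.2 hg)]
  simp only [he]

theorem integral_simplex_succ [CompleteSpace E] {h : (Fin (n + 1) → ℝ) → E}
    (hh : IntegrableOn h (simplex (n + 1))) :
    ∫ x in simplex (n + 1), h x =
      ∫ s in (0 : ℝ)..1, s ^ n • ∫ u in simplex n, h (Fin.snoc (s • u) (1 - s)) := by
  have hΔ : MeasurableSet (simplex (n + 1)) := isClosed_simplex.measurableSet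
  have hne : ∀ᵐ y : ℝ, y ≠ 1 := by simp [ae_iff, measure_singleton]
  calc ∫ x in simplex (n + 1), h x = ∫ x, (simplex (n + 1)).indicator h x :=
        (integral_indicator hΔ).symm
    _ = ∫ y, ∫ u, (simplex (n + 1)).indicator h (Fin.snoc u y) :=
        integral_eq_integral_integral_snoc ((integrable_indicator_iff hΔ).2 hh)
    _ = ∫ y in Ico 0 1, (1 - y) ^ n • ∫ u in simplex n, h (Fin.snoc ((1 - y) • u) y) := by
        rw [← integral_indicator measurableSet_Ico]
        exact integral_congr_ae (hne.mono fun y hy => integral_indicator_simplex_snoc h hy)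
    _ = ∫ s in (0 : ℝ)..1, s ^ n • ∫ u in simplex n, h (Fin.snoc (s • u) (1 - s)) := by
        rw [Measure.restrict_congr_set Ico_ae_eq_Ioc, ← intervalIntegral.integral_of_le zero_le_one]
        simpa using (intervalIntegral.integral_comp_sub_left
          (fun y => (1 - y) ^ n • ∫ u in simplex n, h (Fin.snoc ((1 - y) • u) y)) (a := 0) (b := 1)
          (1 : ℝ)).symm

end Slicing

lemma volume_real_simplex (n : ℕ) : volume.real (simplex n) = (n.factorial : ℝ)⁻¹ := by
  induction n with
  | zero =>
    have : simplex 0 = univ := by ext s; simp [simplex]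
    simp [this, Measure.real, volume_pi]
  | succ n ih =>
    have h := integral_simplex_succ (n := n) (h := fun _ => (1 : ℝ))
      (integrableOn_const isCompact_simplex.measure_lt_top.ne)
    simp only [setIntegral_const, smul_eq_mul, mul_one, ih] at h
    rw [h, intervalIntegral.integral_mul_const, integral_pow, Nat.factorial_succ]
    push_cast
    field_simp
    ring

lemma norm_smul_le_of_mem_Icc {E : Type*} [SeminormedAddCommGroup E] [NormedSpace ℝ E] {s : ℝ}
    (hs : s ∈ Icc 0 1) (x : E) : ‖s • x‖ ≤ ‖x‖ := by
  rw [norm_smul, Real.norm_of_nonneg hs.1]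
  exact mul_le_of_le_one_left (norm_nonneg x) hs.2

section Convolution

variable {n : ℕ} {f : Fin n → ℂ → ℂ} {ζ : ℂ}

lemma continuousOn_prod_simplex (hf : ∀ i, ContinuousOn (f i) (closedBall 0 ‖ζ‖)) :
    ContinuousOn (fun s : Fin n → ℝ => ∏ i, f i (s i • ζ)) (simplex n) :=
  continuousOn_finsetProd _ fun i _ => (hf i).comp (by fun_prop) fun s hs =>
    mem_closedBall_zero_iff.2 <| norm_smul_le_of_mem_Icc
      ⟨(simplex_subset_Icc hs).1 i, (simplex_subset_Icc hs).2 i⟩ ζ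

theorem iterConv_eq_integral_simplex (hf : ∀ i, ContinuousOn (f i) (closedBall 0 ‖ζ‖)) :
    iterConv n f ζ = ζ ^ n * ∫ s in simplex n, ∏ i, f i (s i • ζ) := by
  induction n generalizing ζ with
  | zero => simp [iterConv, volume_real_simplex]
  | succ n ih =>
    have hslice := integral_simplex_succ
      ((continuousOn_prod_simplex hf).integrableOn_compact isCompact_simplex)
    have hsegment : ∀ s ∈ uIcc (0 : ℝ) 1,
        iterConv n (fun i => f i.castSucc) (s • ζ) * f (Fin.last n) (ζ - s • ζ) =
          ζ ^ n * (s ^ n • ∫ u in simplex n,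
            ∏ i, f i ((Fin.snoc (s • u) (1 - s) : Fin (n + 1) → ℝ) i • ζ)) := by
      intro s hs
      rw [uIcc_of_le zero_le_one] at hs
      have hball : closedBall (0 : ℂ) ‖s • ζ‖ ⊆ closedBall 0 ‖ζ‖ :=
        closedBall_subset_closedBall (norm_smul_le_of_mem_Icc hs ζ)
      rw [ih fun i => (hf _).mono hball]
      simp only [Fin.prod_univ_castSucc, Fin.snoc_castSucc, Fin.snoc_last, Pi.smul_apply,
        integral_mul_const, smul_eq_mul, Complex.real_smul, mul_pow, Complex.ofReal_mul,
        Complex.ofReal_pow, Complex.ofReal_sub, Complex.ofReal_one]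
      ring_nf
    rw [iterConv, cvl, intervalIntegral.integral_congr hsegment,
      intervalIntegral.integral_const_mul, ← hslice]
    ring

theorem norm_iterConv_le (hf : ∀ i, ContinuousOn (f i) (closedBall 0 ‖ζ‖)) {M : Fin n → ℝ}
    (hM : ∀ i, ∀ ξ : ℂ, ‖ξ‖ ≤ ‖ζ‖ → ‖f i ξ‖ ≤ M i) :
    ‖iterConv n f ζ‖ ≤ ‖ζ‖ ^ n / n.factorial * ∏ i, M i := by
  have hbound : ∀ s ∈ simplex n, ‖∏ i, f i (s i • ζ)‖ ≤ ∏ i, M i := fun s hs => by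
    rw [norm_prod]
    exact Finset.prod_le_prod (fun i _ => norm_nonneg _) fun i _ => hM i _ <|
      norm_smul_le_of_mem_Icc ⟨(simplex_subset_Icc hs).1 i, (simplex_subset_Icc hs).2 i⟩ ζ
  calc ‖iterConv n f ζ‖ = ‖ζ‖ ^ n * ‖∫ s in simplex n, ∏ i, f i (s i • ζ)‖ := by
        rw [iterConv_eq_integral_simplex hf, norm_mul, norm_pow]
    _ ≤ ‖ζ‖ ^ n * ((∏ i, M i) * volume.real (simplex n)) := by
        gcongr
        exact norm_setIntegral_le_of_norm_le_const isCompact_simplex.measure_lt_top hbound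
    _ = ‖ζ‖ ^ n / n.factorial * ∏ i, M i := by
        rw [volume_real_simplex]
        ring

end Convolution

theorem iterConv_simplex_repr_general (n : ℕ) (r : ℝ)
    (f : Fin n → ℂ → ℂ) (hf : ∀ i, DifferentiableOn ℂ (f i) (ball 0 r))
    (ζ : ℂ) (hζ : ζ ∈ ball (0 : ℂ) r) :
    iterConv n f ζ = ζ ^ n * ∫ s in simplex n, ∏ i, f i (s i • ζ) ∧
    ∀ M : Fin n → ℝ,
      (∀ i, ∀ ξ : ℂ, ‖ξ‖ ≤ ‖ζ‖ → ‖f i ξ‖ ≤ M i) →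
      ‖iterConv n f ζ‖
        ≤ ‖ζ‖ ^ n / n.factorial * ∏ i, M i := by
  have hcont : ∀ i, ContinuousOn (f i) (closedBall 0 ‖ζ‖) := fun i =>
    (hf i).continuousOn.mono (closedBall_subset_ball (mem_ball_zero_iff.1 hζ))
  exact ⟨iterConv_eq_integral_simplex hcont, fun _ hM => norm_iterConv_le hcont hM⟩

/-- Convolution integral representation on the simplex, and the resulting
`1/n!` bound for iterated convolutions. -/
theorem iterConv_simplex_repr (n : ℕ) (r : ℝ) (hr : 0 < r)
    (f : Fin n → ℂ → ℂ) (hf : ∀ i, DifferentiableOn ℂ (f i) (ball 0 r))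
    (ζ : ℂ) (hζ : ζ ∈ ball (0 : ℂ) r) :
    iterConv n f ζ = ζ ^ n * ∫ s in simplex n, ∏ i, f i (s i • ζ) ∧
    ∀ M : Fin n → ℝ,
      (∀ i, ∀ ξ : ℂ, ‖ξ‖ ≤ ‖ζ‖ → ‖f i ξ‖ ≤ M i) →
      ‖iterConv n f ζ‖
        ≤ ‖ζ‖ ^ n / n.factorial * ∏ i, M i :=
  iterConv_simplex_repr_general n r f hf ζ hζ
end
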